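/- arXiv:1805.07245 — 6 statements merged into one kernel-verified Lean document; each statement's English description precedes it below -/
import Mathlib

section
/- Let X be a set of n nonzero variables and let μ be a partition of length exactly n. For any integer k with 1 ≤ k ≤ μ_n, the product s_μ(X) · p_k(X^{-1}) equals the sum over all partitions λ such that μ\λ is a k-ribbon of (−1)^{height(μ\λ)} s_λ(X). -/
/-- A function `ℕ → ℕ` is a partition if it is non-increasing with finitely
many nonzero values. -/
def IsPartitionFun (f : ℕ → ℕ) : Prop := Antitone f ∧ ∃ N, ∀ i, N ≤ i → f i = 0

/-- The cells (Ferrers diagram, 0-indexed: `(row, column)`) of a partition. -/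
def cells (f : ℕ → ℕ) : Set (ℕ × ℕ) := {c | c.2 < f c.1}

/-- The skew diagram `λ \ μ`. -/
def skewCells (mu lam : ℕ → ℕ) : Set (ℕ × ℕ) := cells lam \ cells mu

/-- Two cells are adjacent if they share an edge. -/
def AdjCell (a b : ℕ × ℕ) : Prop :=
  (a.1 = b.1 ∧ (a.2 + 1 = b.2 ∨ b.2 + 1 = a.2)) ∨
    (a.2 = b.2 ∧ (a.1 + 1 = b.1 ∨ b.1 + 1 = a.1))

/-- A set of cells is (edgewise) connected. -/
def ConnectedCells (S : Set (ℕ × ℕ)) : Prop :=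
  ∀ a ∈ S, ∀ b ∈ S, Relation.ReflTransGen (fun u v => u ∈ S ∧ v ∈ S ∧ AdjCell u v) a b

/-- `IsRibbon μ λ r` says that `μ ⊆ λ` and the skew diagram `λ \ μ` is a ribbon
(border strip) of size `r`: it is edgewise connected and contains no `2 × 2`
block of cells. -/
def IsRibbon (mu lam : ℕ → ℕ) (r : ℕ) : Prop :=
  (∀ i, mu i ≤ lam i) ∧ (skewCells mu lam).Finite ∧ (skewCells mu lam).ncard = r ∧
    ConnectedCells (skewCells mu lam) ∧
    ¬∃ c : ℕ × ℕ, c ∈ skewCells mu lam ∧ (c.1 + 1, c.2) ∈ skewCells mu lam ∧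
      (c.1, c.2 + 1) ∈ skewCells mu lam ∧ (c.1 + 1, c.2 + 1) ∈ skewCells mu lam

/-- The height of the skew diagram `λ \ μ`: one less than the number of rows it
occupies. -/
noncomputable def ribbonHeight (mu lam : ℕ → ℕ) : ℕ := {i | mu i < lam i}.ncard - 1

/-- The Schur polynomial `s_λ(x₁, …, xₙ)` for a partition given as a function
`ℕ → ℕ`, defined by the bialternant formula. -/
noncomputable def schurDN (n : ℕ) (lam : ℕ → ℕ) (x : Fin n → ℂ) : ℂ :=
  Matrix.det (Matrix.of fun i j : Fin n => x i ^ (lam (j : ℕ) + (n - 1 - (j : ℕ)))) /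
    Matrix.det (Matrix.of fun i j : Fin n => x i ^ (n - 1 - (j : ℕ)))

/-!
Write `s_λ = a_{λ+δ} / a_δ` with the alternant `a_E = det (x_i ^ E_r)`, and let `β = μ + δ` be
the beta numbers of `μ`. Expanding the determinant, `a_β · p_k(x⁻¹) = ∑_j a_{β - k e_j}`.
If `β_j - k` equals some other `β_i`, two columns agree and the term vanishes. Otherwise, with
`L` the last position where `β_L > β_j - k`, the cycle `(j j+1 … L)` sorts `β - k e_j` into
`λ + δ`, where `λ` is `μ` with the `k`-ribbon on rows `j, …, L` removed; the cycle has sign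
`(-1)^(L - j)`, the height of that ribbon. Conversely every `k`-ribbon removable from `μ` arises
in this way from its top row `j`.
-/

open Finset Equiv Relation

namespace MurnaghanNakayama

section Alternant

variable {R : Type*} [CommRing R] {n : ℕ}

def alternant (x : Fin n → R) (E : Fin n → ℕ) : R :=
  (Matrix.of fun i r => x i ^ E r).det

theorem alternant_eq_zero_of_eq (x : Fin n → R) {E : Fin n → ℕ} {i j : Fin n} (hij : i ≠ j)
    (h : E i = E j) : alternant x E = 0 :=
  Matrix.det_zero_of_column_eq hij fun a => by simp [h]

theorem alternant_comp_perm (x : Fin n → R) (E : Fin n → ℕ) (σ : Perm (Fin n)) :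
    alternant x (E ∘ σ) = Perm.sign σ * alternant x E :=
  Matrix.det_permute' σ (Matrix.of fun i r => x i ^ E r)

theorem prod_pow_mul_inv_pow_eq_prod_pow_update {K : Type*} [Field K] (y : Fin n → K)
    (E : Fin n → ℕ) {k : ℕ} {j : Fin n} (hy : y j ≠ 0) (hk : k ≤ E j) :
    (∏ r, y r ^ E r) * (y j)⁻¹ ^ k = ∏ r, y r ^ Function.update E j (E j - k) r := by
  have hrest : ∀ r ∈ univ.erase j, y r ^ Function.update E j (E j - k) r = y r ^ E r :=
    fun r hr => by rw [Function.update_of_ne (ne_of_mem_erase hr)]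
  rw [← mul_prod_erase univ _ (mem_univ j), ← mul_prod_erase univ _ (mem_univ j),
    prod_congr rfl hrest, Function.update_self, pow_sub₀ _ hy hk, inv_pow]
  ring

theorem alternant_mul_sum_inv_pow {K : Type*} [Field K] {x : Fin n → K} (hx : ∀ i, x i ≠ 0)
    {E : Fin n → ℕ} {k : ℕ} (hE : ∀ r, k ≤ E r) :
    alternant x E * ∑ i, (x i)⁻¹ ^ k = ∑ j, alternant x (Function.update E j (E j - k)) := by
  simp only [alternant, Matrix.det_apply, Matrix.of_apply, sum_mul]
  rw [sum_comm]
  refine sum_congr rfl fun σ _ => ?_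
  rw [← Equiv.sum_comp σ, mul_sum]
  refine sum_congr rfl fun j _ => ?_
  rw [smul_mul_assoc]
  exact congrArg _ (prod_pow_mul_inv_pow_eq_prod_pow_update (x ∘ σ) E (hx _) (hE j))

end Alternant

section Cells

variable {S : Set (ℕ × ℕ)} {lam mu : ℕ → ℕ}

theorem mem_skewCells {i c : ℕ} : (i, c) ∈ skewCells lam mu ↔ lam i ≤ c ∧ c < mu i := by
  simp only [skewCells, cells, Set.mem_sdiff, Set.mem_ofPred_eq]
  omega

theorem AdjCell.symm {a b : ℕ × ℕ} (h : AdjCell a b) : AdjCell b a := by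
  unfold AdjCell at *
  omega

/-- `ConnectedCells S` is the reflexive-transitive closure of this relation. -/
abbrev CellStep (S : Set (ℕ × ℕ)) (u v : ℕ × ℕ) : Prop := u ∈ S ∧ v ∈ S ∧ AdjCell u v

theorem CellStep.reflTransGen_symm {a b : ℕ × ℕ} (h : ReflTransGen (CellStep S) a b) :
    ReflTransGen (CellStep S) b a :=
  ReflTransGen.mono (fun _ _ huv => ⟨huv.2.1, huv.1, AdjCell.symm huv.2.2⟩) _ _
    (reflTransGen_swap.2 h)

theorem reflTransGen_along_row {i c c' : ℕ} (hcc : c ≤ c')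
    (hS : ∀ e, c ≤ e → e ≤ c' → (i, e) ∈ S) :
    ReflTransGen (CellStep S) (i, c') (i, c) := by
  induction c', hcc using Nat.le_induction with
  | base => exact .refl
  | succ c' hcc ih =>
    refine .head ⟨hS _ (by omega) le_rfl, hS _ hcc (by omega), Or.inl ⟨rfl, Or.inr rfl⟩⟩
      (ih fun e he he' => hS e he (by omega))

theorem exists_vertical_step {a b : ℕ × ℕ} (h : ReflTransGen (CellStep S) a b) {i : ℕ}
    (hb : b.1 ≤ i) (ha : i < a.1) : ∃ c, (i, c) ∈ S ∧ (i + 1, c) ∈ S := by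
  induction h with
  | refl => omega
  | @tail p q _ hpq ih =>
    by_cases hp : p.1 ≤ i
    · exact ih hp
    · obtain ⟨hpS, hqS, hadj⟩ := hpq
      have hrow : p.1 = i + 1 ∧ q.1 = i ∧ p.2 = q.2 := by unfold AdjCell at hadj; omega
      refine ⟨q.2, ?_, ?_⟩
      · simpa [← hrow.2.1] using hqS
      · simpa [← hrow.1, ← hrow.2.2] using hpS

end Cells

/-- `μ \ λ` occupies exactly the rows `j, …, L`, and consecutive rows of it overlap in exactly
one column. -/
structure IsRibbonShape (lam mu : ℕ → ℕ) (j L : ℕ) : Prop where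
  le : ∀ i, lam i ≤ mu i
  top_le_end : j ≤ L
  lt_iff : ∀ i, lam i < mu i ↔ j ≤ i ∧ i ≤ L
  succ_eq : ∀ i, j ≤ i → i < L → lam i + 1 = mu (i + 1)

namespace IsRibbonShape

variable {lam lam' mu : ℕ → ℕ} {j L : ℕ}

theorem eq_of_notMem {i : ℕ} (h : IsRibbonShape lam mu j L) (hi : i < j ∨ L < i) :
    lam i = mu i := by
  have := h.le i
  have := h.lt_iff i
  omega

theorem reflTransGen_endCell (h : IsRibbonShape lam mu j L) {i c : ℕ}
    (hc : (i, c) ∈ skewCells lam mu) :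
    ReflTransGen (CellStep (skewCells lam mu)) (i, c) (L, lam L) := by
  obtain ⟨hc1, hc2⟩ := mem_skewCells.1 hc
  have hrow := (h.lt_iff i).1 (by omega)
  have hleft := reflTransGen_along_row (S := skewCells lam mu) hc1 fun e he _ =>
    mem_skewCells.2 ⟨he, by omega⟩
  by_cases hiL : i = L
  · subst hiL
    exact hleft
  have hsucc := h.succ_eq i hrow.1 (by omega)
  have hnext := (h.lt_iff (i + 1)).2 ⟨by omega, by omega⟩
  have hmem : (i + 1, lam i) ∈ skewCells lam mu := mem_skewCells.2 ⟨by omega, by omega⟩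
  exact hleft.trans (.head ⟨mem_skewCells.2 ⟨le_rfl, by omega⟩, hmem, Or.inr ⟨rfl, Or.inl rfl⟩⟩
    (h.reflTransGen_endCell hmem))
termination_by L - i

theorem connected (h : IsRibbonShape lam mu j L) : ConnectedCells (skewCells lam mu) :=
  fun _ ha _ hb =>
    (h.reflTransGen_endCell ha).trans (CellStep.reflTransGen_symm (h.reflTransGen_endCell hb))

theorem not_square (h : IsRibbonShape lam mu j L) : ¬∃ c : ℕ × ℕ, c ∈ skewCells lam mu ∧
    (c.1 + 1, c.2) ∈ skewCells lam mu ∧ (c.1, c.2 + 1) ∈ skewCells lam mu ∧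
      (c.1 + 1, c.2 + 1) ∈ skewCells lam mu := by
  rintro ⟨⟨i, c⟩, h1, -, -, h4⟩
  dsimp only at h4
  obtain ⟨h1l, h1r⟩ := mem_skewCells.1 h1
  obtain ⟨h4l, h4r⟩ := mem_skewCells.1 h4
  have := (h.lt_iff i).1 (by omega)
  have := (h.lt_iff (i + 1)).1 (by omega)
  have := h.succ_eq i (by omega) (by omega)
  omega

theorem skewCells_eq (h : IsRibbonShape lam mu j L) :
    skewCells lam mu = ↑((Icc j L).biUnion fun i => {i} ×ˢ Ico (lam i) (mu i)) := by
  ext ⟨i, c⟩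
  simp only [mem_skewCells, coe_biUnion, mem_coe, mem_Icc, Set.mem_iUnion, mem_product,
    mem_singleton, mem_Ico, exists_prop]
  constructor
  · rintro hc
    exact ⟨i, (h.lt_iff i).1 (by omega), rfl, hc⟩
  · rintro ⟨_, -, rfl, hc⟩
    exact hc

theorem ncard_skewCells_add (h : IsRibbonShape lam mu j L) :
    (skewCells lam mu).ncard + lam L = mu j + (L - j) := by
  rw [h.skewCells_eq, Set.ncard_coe_finset, card_biUnion]
  · simp only [card_product, card_singleton, Nat.card_Ico, one_mul]
    have hsucc := h.succ_eq
    have hle := h.le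
    have hjL := h.top_le_end
    clear h
    induction L, hjL using Nat.le_induction with
    | base => simp only [Icc_self, sum_singleton]; have := hle j; omega
    | succ L hjL ih =>
      rw [sum_Icc_succ_top (by omega)]
      have := ih fun i hi hiL => hsucc i hi (by omega)
      have := hsucc L hjL (by omega)
      have := hle (L + 1)
      omega
  · intro _ _ _ _ hab
    simp only [disjoint_left, mem_product, mem_singleton]
    rintro _ ⟨rfl, -⟩ ⟨rfl, -⟩
    exact hab rfl

theorem isRibbon (h : IsRibbonShape lam mu j L) : IsRibbon lam mu (skewCells lam mu).ncard :=
  ⟨h.le, by rw [h.skewCells_eq]; exact finite_toSet _, rfl, h.connected, h.not_square⟩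

theorem ribbonHeight_eq (h : IsRibbonShape lam mu j L) : ribbonHeight lam mu = L - j := by
  have hrows : {i | lam i < mu i} = ↑(Icc j L) := by
    ext i
    simpa using h.lt_iff i
  rw [ribbonHeight, hrows, Set.ncard_coe_finset, Nat.card_Icc]
  omega

theorem top_eq {j' L' : ℕ} (h : IsRibbonShape lam mu j L) (h' : IsRibbonShape lam mu j' L') :
    j = j' := by
  have := (h'.lt_iff j).1 ((h.lt_iff j).2 ⟨le_rfl, h.top_le_end⟩)
  have := (h.lt_iff j').1 ((h'.lt_iff j').2 ⟨le_rfl, h'.top_le_end⟩)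
  omega

theorem eq_of_end_eq (h : IsRibbonShape lam mu j L) (h' : IsRibbonShape lam' mu j L)
    (hL : lam L = lam' L) : lam = lam' := by
  funext i
  by_cases hi : i < j ∨ L < i
  · rw [h.eq_of_notMem hi, h'.eq_of_notMem hi]
  · by_cases hiL : i = L
    · rwa [hiL]
    · have := h.succ_eq i (by omega) (by omega)
      have := h'.succ_eq i (by omega) (by omega)
      omega

theorem antitone (h : IsRibbonShape lam mu j L) (hmu : Antitone mu)
    (hL : mu (L + 1) ≤ lam L) : Antitone lam := by
  refine antitone_nat_of_succ_le fun i => ?_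
  have hmu_succ : mu (i + 1) ≤ mu i := hmu (by omega)
  have := h.le (i + 1)
  rcases lt_trichotomy i L with hiL | rfl | hLi
  · by_cases hji : j ≤ i
    · have := h.succ_eq i hji hiL
      have := (h.lt_iff (i + 1)).2 ⟨by omega, by omega⟩
      omega
    · rw [h.eq_of_notMem (i := i) (Or.inl (by omega))]
      omega
  · rwa [h.eq_of_notMem (Or.inr (by omega))]
  · rw [h.eq_of_notMem (Or.inr hLi), h.eq_of_notMem (Or.inr (by omega))]
    exact hmu_succ

end IsRibbonShape

theorem succ_eq_of_not_square {lam mu : ℕ → ℕ} (hlam : Antitone lam) (hmu : Antitone mu)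
    (hsq : ¬∃ c : ℕ × ℕ, c ∈ skewCells lam mu ∧ (c.1 + 1, c.2) ∈ skewCells lam mu ∧
      (c.1, c.2 + 1) ∈ skewCells lam mu ∧ (c.1 + 1, c.2 + 1) ∈ skewCells lam mu)
    {i : ℕ} (hi : lam i < mu (i + 1)) : lam i + 1 = mu (i + 1) := by
  have : lam (i + 1) ≤ lam i := hlam (by omega)
  have : mu (i + 1) ≤ mu i := hmu (by omega)
  by_contra hne
  refine hsq ⟨(i, lam i), ?_, ?_, ?_, ?_⟩ <;> simp only [mem_skewCells] <;> omega

theorem IsRibbon.exists_isRibbonShape {lam mu : ℕ → ℕ} {k : ℕ} (hr : IsRibbon lam mu k)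
    (hk : 0 < k) (hlam : Antitone lam) (hmu : Antitone mu) : ∃ j L, IsRibbonShape lam mu j L := by
  classical
  obtain ⟨hle, hfin, hcard, hconn, hsq⟩ := hr
  set rows := hfin.toFinset.image Prod.fst
  have hrows : ∀ i, i ∈ rows ↔ lam i < mu i := fun i => by
    simp only [rows, mem_image, Set.Finite.mem_toFinset]
    refine ⟨?_, fun h => ⟨(i, lam i), mem_skewCells.2 ⟨le_rfl, h⟩, rfl⟩⟩
    rintro ⟨⟨i, c⟩, hc, rfl⟩
    have := mem_skewCells.1 hc
    dsimp only
    omega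
  obtain ⟨⟨i₀, c₀⟩, hc₀⟩ := Set.nonempty_of_ncard_ne_zero (hcard ▸ hk.ne')
  have hne : rows.Nonempty := ⟨i₀, (hrows i₀).2 (by have := mem_skewCells.1 hc₀; omega)⟩
  have hj := (hrows _).1 (rows.min'_mem hne)
  have hL := (hrows _).1 (rows.max'_mem hne)
  have hstep : ∀ i, rows.min' hne ≤ i → i < rows.max' hne →
      ∃ c, (i, c) ∈ skewCells lam mu ∧ (i + 1, c) ∈ skewCells lam mu := fun i hji hiL =>
    exists_vertical_step (hconn _ (mem_skewCells.2 ⟨le_rfl, hL⟩) _ (mem_skewCells.2 ⟨le_rfl, hj⟩))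
      hji hiL
  refine ⟨rows.min' hne, rows.max' hne, hle, rows.min'_le _ (rows.max'_mem hne),
    fun i => ⟨fun h => ⟨rows.min'_le _ ((hrows i).2 h), rows.le_max' _ ((hrows i).2 h)⟩,
      fun ⟨hji, hiL⟩ => ?_⟩, fun i hji hiL => ?_⟩
  · rcases hiL.lt_or_eq with hiL | rfl
    · obtain ⟨c, hc, -⟩ := hstep i hji hiL
      have := mem_skewCells.1 hc
      omega
    · exact hL
  · obtain ⟨c, hc, hc'⟩ := hstep i hji hiL
    have := mem_skewCells.1 hc
    have := mem_skewCells.1 hc'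
    exact succ_eq_of_not_square hlam hmu hsq (by omega)

section Beta

def beta (n : ℕ) (mu : ℕ → ℕ) (i : ℕ) : ℕ := mu i + (n - 1 - i)

variable {n : ℕ} {lam mu : ℕ → ℕ} {j L : ℕ}

theorem beta_lt_beta (hmu : Antitone mu) {i i' : ℕ} (h : i < i') (h' : i' < n) :
    beta n mu i' < beta n mu i := by
  have := hmu h.le
  unfold beta
  omega

theorem IsRibbonShape.beta_end_add_ncard (h : IsRibbonShape lam mu j L) (hL : L < n) :
    beta n lam L + (skewCells lam mu).ncard = beta n mu j := by
  have := h.ncard_skewCells_add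
  have := h.top_le_end
  unfold beta
  omega

theorem IsRibbonShape.beta_comp_cycleIcc {j L : Fin n} (h : IsRibbonShape lam mu j L) :
    (fun r : Fin n => beta n lam r) =
      Function.update (fun r : Fin n => beta n mu r) j (beta n lam L) ∘ Fin.cycleIcc j L := by
  have : NeZero n := j.neZero
  have hjL : j ≤ L := h.top_le_end
  funext r
  simp only [Function.comp_apply]
  rcases lt_or_ge r j with hrj | hjr
  · rw [Fin.cycleIcc_of_lt hrj, Function.update_of_ne hrj.ne, beta, beta,
      h.eq_of_notMem (Or.inl hrj)]
  rcases lt_trichotomy r L with hrL | rfl | hLr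
  · have hr1 : ((r + 1 : Fin n) : ℕ) = r + 1 := Fin.val_add_one_of_lt' (by omega)
    rw [Fin.cycleIcc_of_ge_of_lt hjr hrL, Function.update_of_ne (by omega), hr1]
    have := h.succ_eq r hjr hrL
    unfold beta
    omega
  · rw [Fin.cycleIcc_of_last hjL, Function.update_self]
  · rw [Fin.cycleIcc_of_gt hLr, Function.update_of_ne (by omega), beta, beta,
      h.eq_of_notMem (Or.inr hLr)]

theorem IsRibbonShape.alternant_update_beta {R : Type*} [CommRing R] (x : Fin n → R)
    {j L : Fin n} (h : IsRibbonShape lam mu j L) :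
    alternant x (Function.update (fun r : Fin n => beta n mu r) j (beta n lam L)) =
      (-1) ^ ribbonHeight lam mu * alternant x fun r => beta n lam r := by
  rw [h.beta_comp_cycleIcc, alternant_comp_perm, Fin.sign_cycleIcc_of_le h.top_le_end,
    h.ribbonHeight_eq, ← mul_assoc]
  push_cast
  rw [← mul_pow, neg_one_mul, neg_neg, one_pow, one_mul]

end Beta

section Removal

variable {n k : ℕ} {lam mu : ℕ → ℕ} {j L : ℕ}

/-- Removing the `k`-ribbon with top row `j` moves the beta number `β_j` down to `β_j - k`,
past `β_{j+1}, …, β_L`; this is that `L`. -/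
def ribbonEnd (n k : ℕ) (mu : ℕ → ℕ) (j : ℕ) : ℕ :=
  Nat.findGreatest (fun i => i < n ∧ beta n mu j - k < beta n mu i) n

def removeRibbon (n k : ℕ) (mu : ℕ → ℕ) (j : ℕ) (i : ℕ) : ℕ :=
  if j ≤ i ∧ i < ribbonEnd n k mu j then mu (i + 1) - 1
  else if i = ribbonEnd n k mu j then beta n mu j - k - (n - 1 - i)
  else mu i

def IsRemovable (n k : ℕ) (mu : ℕ → ℕ) (j : ℕ) : Prop :=
  ∀ i < n, beta n mu i ≠ beta n mu j - k

theorem ribbonEnd_spec (hk : 0 < k) (hkj : k ≤ mu j) (hj : j < n) :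
    j ≤ ribbonEnd n k mu j ∧ ribbonEnd n k mu j < n ∧
      beta n mu j - k < beta n mu (ribbonEnd n k mu j) := by
  have hP : j < n ∧ beta n mu j - k < beta n mu j := ⟨hj, by unfold beta; omega⟩
  exact ⟨Nat.le_findGreatest hj.le hP, Nat.findGreatest_spec (P := fun i => i < n ∧ _) hj.le hP⟩

theorem beta_le_of_ribbonEnd_lt {i : ℕ} (hi : ribbonEnd n k mu j < i) (hin : i < n) :
    beta n mu i ≤ beta n mu j - k :=
  not_lt.1 fun h => Nat.findGreatest_is_greatest hi hin.le ⟨hin, h⟩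

theorem isRibbonShape_removeRibbon (hk : 0 < k) (hkj : k ≤ mu j) (hj : j < n)
    (hmu : Antitone mu) : IsRibbonShape (removeRibbon n k mu j) mu j (ribbonEnd n k mu j) := by
  obtain ⟨hjL, hLn, hlt⟩ := ribbonEnd_spec hk hkj hj
  have hmuL : ∀ i, i ≤ ribbonEnd n k mu j → mu (ribbonEnd n k mu j) ≤ mu i := fun i hi => hmu hi
  refine ⟨fun i => ?_, hjL, fun i => ?_, fun i hji hiL => ?_⟩ <;> unfold removeRibbon <;>
    unfold beta at * <;> have : mu (i + 1) ≤ mu i := hmu (by omega)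
  · split_ifs with _ hiL <;> try subst hiL
    all_goals omega
  · have := hmuL i
    split_ifs with _ hiL <;> try subst hiL
    all_goals omega
  · have := hmuL (i + 1) (by omega)
    rw [if_pos ⟨hji, hiL⟩]
    omega

theorem beta_removeRibbon_ribbonEnd (hk : 0 < k) (hkj : k ≤ mu j) (hj : j < n) :
    beta n (removeRibbon n k mu j) (ribbonEnd n k mu j) = beta n mu j - k := by
  obtain ⟨hjL, hLn, -⟩ := ribbonEnd_spec hk hkj hj
  rw [beta, removeRibbon, if_neg (by omega), if_pos rfl, beta]
  omega

theorem ncard_skewCells_removeRibbon (hk : 0 < k) (hkj : k ≤ mu j) (hj : j < n)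
    (hmu : Antitone mu) : (skewCells (removeRibbon n k mu j) mu).ncard = k := by
  have := (isRibbonShape_removeRibbon hk hkj hj hmu).beta_end_add_ncard
    (ribbonEnd_spec hk hkj hj).2.1
  rw [beta_removeRibbon_ribbonEnd hk hkj hj] at this
  have : k ≤ beta n mu j := hkj.trans (Nat.le_add_right _ _)
  omega

theorem antitone_removeRibbon (hk : 0 < k) (hkj : k ≤ mu j) (hj : j < n) (hmu : Antitone mu)
    (h0 : ∀ i, n ≤ i → mu i = 0) (hrem : IsRemovable n k mu j) :
    Antitone (removeRibbon n k mu j) := by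
  obtain ⟨hjL, hLn, -⟩ := ribbonEnd_spec hk hkj hj
  refine (isRibbonShape_removeRibbon hk hkj hj hmu).antitone hmu ?_
  have hend := beta_removeRibbon_ribbonEnd hk hkj hj
  rcases lt_or_ge (ribbonEnd n k mu j + 1) n with hL1 | hL1
  · have := beta_le_of_ribbonEnd_lt (lt_add_one _) hL1
    have := hrem _ hL1
    unfold beta at *
    omega
  · rw [h0 _ hL1]
    exact Nat.zero_le _

theorem removeRibbon_inj {i : ℕ} (hk : 0 < k) (hmu : Antitone mu) (hki : k ≤ mu i)
    (hi : i < n) (hkj : k ≤ mu j) (hj : j < n)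
    (h : removeRibbon n k mu i = removeRibbon n k mu j) : i = j := by
  have hshape := isRibbonShape_removeRibbon hk hki hi hmu
  rw [h] at hshape
  exact hshape.top_eq (isRibbonShape_removeRibbon hk hkj hj hmu)

namespace IsRibbonShape

theorem ribbonEnd_eq (h : IsRibbonShape lam mu j L) (hlam : Antitone lam) (hL : L < n)
    (hcard : (skewCells lam mu).ncard = k) : ribbonEnd n k mu j = L := by
  have hend := h.beta_end_add_ncard hL
  have hLrow := (h.lt_iff L).2 ⟨h.top_le_end, le_rfl⟩
  refine Nat.findGreatest_eq_iff.2 ⟨hL.le, fun _ => ⟨hL, ?_⟩, fun i hLi hin ⟨hi, hlt⟩ => ?_⟩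
  · unfold beta at *
    omega
  · have := beta_lt_beta hlam hLi hi
    rw [beta, h.eq_of_notMem (Or.inr hLi)] at this
    unfold beta at *
    omega

theorem isRemovable (h : IsRibbonShape lam mu j L) (hlam : Antitone lam) (hmu : Antitone mu)
    (hL : L < n) (hcard : (skewCells lam mu).ncard = k) : IsRemovable n k mu j := by
  intro i hi
  have hend := h.beta_end_add_ncard hL
  have hLrow := (h.lt_iff L).2 ⟨h.top_le_end, le_rfl⟩
  rcases le_or_gt i L with hiL | hLi
  · have := hmu hiL
    unfold beta at *
    omega
  · have := beta_lt_beta hlam hLi hi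
    rw [beta, h.eq_of_notMem (Or.inr hLi)] at this
    unfold beta at *
    omega

theorem removeRibbon_eq (h : IsRibbonShape lam mu j L) (hk : 0 < k) (hkj : k ≤ mu j)
    (hlam : Antitone lam) (hmu : Antitone mu) (hL : L < n)
    (hcard : (skewCells lam mu).ncard = k) : removeRibbon n k mu j = lam := by
  have hj : j < n := h.top_le_end.trans_lt hL
  have hend := h.ribbonEnd_eq hlam hL hcard
  have hshape := isRibbonShape_removeRibbon hk hkj hj hmu
  rw [hend] at hshape
  refine hshape.eq_of_end_eq h ?_
  have h1 := beta_removeRibbon_ribbonEnd hk hkj hj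
  have h2 := h.beta_end_add_ncard hL
  rw [hend] at h1
  unfold beta at *
  omega

end IsRibbonShape

end Removal

section Correspondence

variable {n k : ℕ} {lam mu : ℕ → ℕ}

theorem isPartitionFun_and_isRibbon_iff (hk : 0 < k) (hmu : Antitone mu)
    (hkmu : k ≤ mu (n - 1)) (h0 : ∀ i, n ≤ i → mu i = 0) :
    IsPartitionFun lam ∧ IsRibbon lam mu k ↔
      ∃ j : Fin n, IsRemovable n k mu j ∧ removeRibbon n k mu j = lam := by
  have hkj : ∀ j < n, k ≤ mu j := fun j hj => hkmu.trans (hmu (by omega))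
  constructor
  · rintro ⟨⟨hlam, -⟩, hr⟩
    obtain ⟨j, L, h⟩ := IsRibbon.exists_isRibbonShape hr hk hlam hmu
    have hL : L < n := by
      by_contra hL
      have := (h.lt_iff L).2 ⟨h.top_le_end, le_rfl⟩
      rw [h0 L (by omega)] at this
      omega
    have hj : j < n := h.top_le_end.trans_lt hL
    exact ⟨⟨j, hj⟩, h.isRemovable hlam hmu hL hr.2.2.1,
      h.removeRibbon_eq hk (hkj j hj) hlam hmu hL hr.2.2.1⟩
  · rintro ⟨j, hrem, rfl⟩
    have h := isRibbonShape_removeRibbon hk (hkj j j.2) j.2 hmu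
    refine ⟨⟨antitone_removeRibbon hk (hkj j j.2) j.2 hmu h0 hrem, n, fun i hi => ?_⟩, ?_⟩
    · exact Nat.eq_zero_of_le_zero (h0 i hi ▸ h.le i)
    · simpa only [ncard_skewCells_removeRibbon hk (hkj j j.2) j.2 hmu] using h.isRibbon

variable {R : Type*} [CommRing R]

theorem alternant_update_beta_sub (x : Fin n → R) (hk : 0 < k) (hmu : Antitone mu)
    {j : Fin n} (hkj : k ≤ mu j) :
    alternant x (Function.update (fun r : Fin n => beta n mu r) j (beta n mu j - k)) =
      (-1) ^ ribbonHeight (removeRibbon n k mu j) mu *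
        alternant x fun r => beta n (removeRibbon n k mu j) r := by
  obtain ⟨-, hLn, -⟩ := ribbonEnd_spec hk hkj j.2
  have h : IsRibbonShape (removeRibbon n k mu j) mu j (⟨ribbonEnd n k mu j, hLn⟩ : Fin n) :=
    isRibbonShape_removeRibbon hk hkj j.2 hmu
  rw [← beta_removeRibbon_ribbonEnd hk hkj j.2]
  exact h.alternant_update_beta x

theorem alternant_update_beta_sub_eq_zero (x : Fin n → R) (hk : 0 < k) {j : Fin n}
    (hkj : k ≤ mu j) (hrem : ¬IsRemovable n k mu j) :
    alternant x (Function.update (fun r : Fin n => beta n mu r) j (beta n mu j - k)) = 0 := by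
  simp only [IsRemovable, not_forall, not_not] at hrem
  obtain ⟨i, hi, hβ⟩ := hrem
  have hij : (⟨i, hi⟩ : Fin n) ≠ j := by
    rintro rfl
    simp only [beta] at hβ hkj
    omega
  refine alternant_eq_zero_of_eq x hij ?_
  rw [Function.update_of_ne hij, Function.update_self]
  exact hβ

theorem schurDN_eq_alternant_div (x : Fin n → ℂ) :
    schurDN n lam x = alternant x (fun r => beta n lam r) / alternant x fun r => n - 1 - r :=
  rfl

end Correspondence

end MurnaghanNakayama

open MurnaghanNakayama

theorem schur_times_inverse_power_sum_general (n k : ℕ) (hk : 0 < k) (mu : ℕ → ℕ)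
    (hmu : IsPartitionFun mu) (hlen0 : ∀ i, n ≤ i → mu i = 0)
    (hkmu : k ≤ mu (n - 1))
    (x : Fin n → ℂ) (hx : ∀ i, x i ≠ 0) :
    schurDN n mu x * ∑ i, (x i)⁻¹ ^ k =
      ∑ᶠ (lam : ℕ → ℕ) (_ : IsPartitionFun lam ∧ IsRibbon lam mu k),
        ((-1 : ℂ) ^ ribbonHeight lam mu) * schurDN n lam x := by
  classical
  obtain ⟨hmu, -⟩ := hmu
  have hkj : ∀ j : Fin n, k ≤ mu j := fun j => hkmu.trans (hmu (by omega))
  set V := univ.filter fun j : Fin n => IsRemovable n k mu j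
  have hV : {lam | IsPartitionFun lam ∧ IsRibbon lam mu k} =
      ↑(V.image fun j : Fin n => removeRibbon n k mu j) := by
    ext lam
    simp [isPartitionFun_and_isRibbon_iff hk hmu hkmu hlen0, V]
  have hinj : Set.InjOn (fun j : Fin n => removeRibbon n k mu j) ↑V := fun i _ j _ hij =>
    Fin.ext (removeRibbon_inj hk hmu (hkj i) i.2 (hkj j) j.2 hij)
  calc schurDN n mu x * ∑ i, (x i)⁻¹ ^ k
      = ∑ j, alternant x (Function.update (fun r : Fin n => beta n mu r) j (beta n mu j - k)) /
          alternant x fun r => n - 1 - r := by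
        rw [schurDN_eq_alternant_div, div_mul_eq_mul_div,
          alternant_mul_sum_inv_pow (E := fun r => beta n mu r) hx
            fun r => (hkj r).trans (Nat.le_add_right _ _), sum_div]
    _ = ∑ j ∈ V, alternant x (Function.update (fun r : Fin n => beta n mu r) j
          (beta n mu j - k)) / alternant x fun r => n - 1 - r :=
        (sum_filter_of_ne fun j _ hj => by_contra fun hrem => hj (by
          rw [alternant_update_beta_sub_eq_zero x hk (hkj j) hrem, zero_div])).symm
    _ = ∑ j ∈ V, (-1 : ℂ) ^ ribbonHeight (removeRibbon n k mu j) mu *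
          schurDN n (removeRibbon n k mu j) x := sum_congr rfl fun j _ => by
        rw [alternant_update_beta_sub x hk hmu (hkj j), mul_div_assoc, schurDN_eq_alternant_div]
    _ = ∑ᶠ lam ∈ {lam | IsPartitionFun lam ∧ IsRibbon lam mu k},
          (-1 : ℂ) ^ ribbonHeight lam mu * schurDN n lam x := by
        rw [hV, finsum_mem_coe_finset, sum_image hinj]

/-- Let `X` consist of `n` nonzero variables and let `μ` be a partition of
length exactly `n`. For `1 ≤ k ≤ μ_n`,
`s_μ(X) · p_k(X⁻¹) = ∑_{λ : μ\λ is a k-ribbon} (-1)^{height(μ\λ)} s_λ(X)`. -/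
theorem schur_times_inverse_power_sum (n k : ℕ) (hk : 0 < k) (mu : ℕ → ℕ)
    (hmu : IsPartitionFun mu) (hlen0 : ∀ i, n ≤ i → mu i = 0)
    (hlen1 : 0 < n → 0 < mu (n - 1)) (hkmu : k ≤ mu (n - 1))
    (x : Fin n → ℂ) (hx : ∀ i, x i ≠ 0) :
    schurDN n mu x * ∑ i, (x i)⁻¹ ^ k =
      ∑ᶠ (lam : ℕ → ℕ) (_ : IsPartitionFun lam ∧ IsRibbon lam mu k),
        ((-1 : ℂ) ^ ribbonHeight lam mu) * schurDN n lam x :=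
  schur_times_inverse_power_sum_general n k hk mu hmu hlen0 hkmu x hx
end

section
/- Fix a positive integer k and a partition λ contained in the rectangle ⟨m^n⟩. Then the number of partitions μ such that λ\μ is a k-ribbon is at most min{m,n}, and likewise the number of partitions μ ⊂ ⟨m^n⟩ such that μ\λ is a k-ribbon is at most min{m,n}. -/
/-!
Consecutive rows of a ribbon overlap in exactly one column (connectedness forces an overlap, the
absence of `2 × 2` blocks forbids a longer one). So if `λ \ μ` is a ribbon occupying rows
`s, …, t`, then `μᵢ + 1 = λᵢ₊₁` for `s ≤ i < t` and `μᵢ = λᵢ` outside these rows. Two ribbons of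
the same size removed from `λ` with the same top row are therefore nested, hence equal, and the
top row is one of the `n` nonzero rows of `λ`. Conjugating gives the bound `m`, and for ribbons
added to `λ` the bottom row plays the role of the top row.
-/

open Set

section SkewCells

variable {a b a' b' : ℕ → ℕ} {r : ℕ}

@[simp]
lemma mem_skewCells {i j : ℕ} : (i, j) ∈ skewCells a b ↔ a i ≤ j ∧ j < b i := by
  simp [skewCells, cells, and_comm]

lemma AdjCell.swap {p q : ℕ × ℕ} (h : AdjCell p q) : AdjCell p.swap q.swap := by
  unfold AdjCell at h ⊢
  tauto

lemma ConnectedCells.image_swap {S : Set (ℕ × ℕ)} (hS : ConnectedCells S) :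
    ConnectedCells (Prod.swap '' S) := by
  rintro _ ⟨p, hp, rfl⟩ _ ⟨q, hq, rfl⟩
  exact (hS p hp q hq).lift Prod.swap fun u v ⟨hu, hv, huv⟩ =>
    ⟨mem_image_of_mem _ hu, mem_image_of_mem _ hv, huv.swap⟩

lemma exists_vertical_domino_of_reflTransGen {S : Set (ℕ × ℕ)} {p q : ℕ × ℕ}
    (hpq : Relation.ReflTransGen (fun u v => u ∈ S ∧ v ∈ S ∧ AdjCell u v) p q) {i : ℕ}
    (hp : p.1 ≤ i) (hq : i < q.1) : ∃ j, (i, j) ∈ S ∧ (i + 1, j) ∈ S := by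
  induction hpq with
  | refl => omega
  | @tail u v _ huv ih =>
    obtain ⟨hu, hv, hadj⟩ := huv
    by_cases hiu : i < u.1
    · exact ih hiu
    obtain ⟨u1, u2⟩ := u
    obtain ⟨v1, v2⟩ := v
    rcases hadj with ⟨h1, -⟩ | ⟨h2, h1 | h1⟩ <;> simp only at h1 hiu hq
    · omega
    · obtain rfl : i = u1 := by omega
      subst h1 h2
      exact ⟨u2, hu, hv⟩
    · omega

lemma eq_of_skewCells_subset (hab : ∀ i, a i ≤ b i) (ha : ∀ i, a' i ≤ a i)
    (hb : ∀ i, b i ≤ b' i) (hS : skewCells a' b' ⊆ skewCells a b) : a = a' ∧ b = b' := by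
  have hrow : ∀ i, a i = a' i ∧ b i = b' i := by
    intro i
    have := ha i
    have := hb i
    by_cases hi : a' i < b' i
    · have hleft := @hS (i, a' i) (by simp [hi])
      have hright := @hS (i, b' i - 1) (by simp only [mem_skewCells]; omega)
      simp only [mem_skewCells] at hleft hright
      omega
    · have := hab i
      omega
  exact ⟨funext fun i => (hrow i).1, funext fun i => (hrow i).2⟩

lemma IsRibbon.eq_of_le (h : IsRibbon a b r) (h' : IsRibbon a' b' r) (ha : ∀ i, a' i ≤ a i)
    (hb : ∀ i, b i ≤ b' i) : a = a' ∧ b = b' := by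
  have hsub : skewCells a b ⊆ skewCells a' b' := by
    rintro ⟨i, j⟩ hij
    simp only [mem_skewCells] at hij ⊢
    exact ⟨(ha i).trans hij.1, hij.2.trans_le (hb i)⟩
  refine eq_of_skewCells_subset h.1 ha hb (eq_of_subset_of_ncard_le hsub ?_ h'.2.1).ge
  rw [h.2.2.1, h'.2.2.1]

end SkewCells

section Conjugate

/-- `conjugate f j` is the length of column `j` of `f`. -/
noncomputable def conjugate (f : ℕ → ℕ) (j : ℕ) : ℕ := sInf {i | f i ≤ j}

namespace IsPartitionFun

variable {f a b : ℕ → ℕ}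

lemma lt_conjugate_iff (hf : IsPartitionFun f) {i j : ℕ} : i < conjugate f j ↔ j < f i := by
  obtain ⟨hanti, N, hN⟩ := hf
  have hne : {i | f i ≤ j}.Nonempty := ⟨N, by simp [hN N le_rfl]⟩
  constructor
  · intro hi
    by_contra! hfi
    exact (Nat.sInf_le (s := {i | f i ≤ j}) hfi).not_gt hi
  · intro hj
    by_contra! hi
    exact ((hanti hi).trans (Nat.sInf_mem (s := {i | f i ≤ j}) hne)).not_gt hj

protected lemma conjugate (hf : IsPartitionFun f) : IsPartitionFun (conjugate f) :=
  ⟨fun _ _ hj => le_of_forall_lt fun _ hi =>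
      hf.lt_conjugate_iff.mpr ((hf.lt_conjugate_iff.mp hi).trans_le' hj),
    f 0, fun _ hj => Nat.eq_zero_of_le_zero (Nat.sInf_le hj)⟩

lemma conjugate_conjugate (hf : IsPartitionFun f) : conjugate (conjugate f) = f :=
  funext fun i => eq_of_forall_lt_iff fun j => by
    rw [hf.conjugate.lt_conjugate_iff, hf.lt_conjugate_iff]

lemma conjugate_le_conjugate (ha : IsPartitionFun a) (hb : IsPartitionFun b)
    (hab : ∀ i, a i ≤ b i) (j : ℕ) : conjugate a j ≤ conjugate b j :=
  le_of_forall_lt fun i hi =>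
    hb.lt_conjugate_iff.mpr ((ha.lt_conjugate_iff.mp hi).trans_le (hab i))

lemma mem_skewCells_conjugate (ha : IsPartitionFun a) (hb : IsPartitionFun b) {i j : ℕ} :
    (i, j) ∈ skewCells (conjugate a) (conjugate b) ↔ (j, i) ∈ skewCells a b := by
  simp only [mem_skewCells, ← not_lt, ha.lt_conjugate_iff, hb.lt_conjugate_iff]

lemma skewCells_conjugate (ha : IsPartitionFun a) (hb : IsPartitionFun b) :
    skewCells (conjugate a) (conjugate b) = Prod.swap '' skewCells a b := by
  rw [image_swap_eq_preimage_swap]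
  ext ⟨i, j⟩
  exact ha.mem_skewCells_conjugate hb

end IsPartitionFun

lemma conjugate_injOn : InjOn conjugate {f | IsPartitionFun f} := fun f hf g hg hfg => by
  rw [← IsPartitionFun.conjugate_conjugate hf, hfg, IsPartitionFun.conjugate_conjugate hg]

lemma conjugate_eq_zero {f : ℕ → ℕ} {m j : ℕ} (hm : ∀ i, f i ≤ m) (hj : m ≤ j) :
    conjugate f j = 0 :=
  Nat.eq_zero_of_le_zero (Nat.sInf_le ((hm 0).trans hj))

lemma conjugate_le {f : ℕ → ℕ} {n : ℕ} (hn : ∀ i, n ≤ i → f i = 0) (j : ℕ) :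
    conjugate f j ≤ n :=
  Nat.sInf_le (by simp [hn n le_rfl])

lemma IsRibbon.conjugate {a b : ℕ → ℕ} {r : ℕ} (ha : IsPartitionFun a) (hb : IsPartitionFun b)
    (h : IsRibbon a b r) : IsRibbon (conjugate a) (conjugate b) r := by
  obtain ⟨hle, hfin, hcard, hconn, hblock⟩ := h
  rw [IsRibbon, ha.skewCells_conjugate hb]
  refine ⟨ha.conjugate_le_conjugate hb hle, hfin.image _,
    Prod.swap_injective.injOn.ncard_image.trans hcard, hconn.image_swap, ?_⟩
  rintro ⟨⟨i, j⟩, hblock'⟩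
  simp only [← ha.skewCells_conjugate hb, ha.mem_skewCells_conjugate hb] at hblock'
  obtain ⟨h1, h2, h3, h4⟩ := hblock'
  exact hblock ⟨(j, i), h1, h3, h2, h4⟩

end Conjugate

section Rows

noncomputable def topRow (a b : ℕ → ℕ) : ℕ := sInf {i | a i < b i}

noncomputable def bottomRow (a b : ℕ → ℕ) : ℕ := sSup {i | a i < b i}

variable {a b : ℕ → ℕ} {r i : ℕ}

lemma topRow_le (hi : a i < b i) : topRow a b ≤ i :=
  Nat.sInf_le hi

lemma le_bottomRow (hb : IsPartitionFun b) (hi : a i < b i) : i ≤ bottomRow a b := by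
  obtain ⟨-, N, hN⟩ := hb
  refine le_csSup ⟨N, fun l hl => ?_⟩ hi
  by_contra! hNl
  have hl' : a l < b l := hl
  have := hN l hNl.le
  omega

lemma IsRibbon.rows_nonempty (h : IsRibbon a b r) (hr : 0 < r) : {i | a i < b i}.Nonempty := by
  obtain ⟨⟨i, j⟩, hij⟩ := nonempty_of_ncard_ne_zero (h.2.2.1 ▸ hr.ne')
  rw [mem_skewCells] at hij
  exact ⟨i, hij.1.trans_lt hij.2⟩

lemma IsRibbon.topRow_mem (h : IsRibbon a b r) (hr : 0 < r) :
    a (topRow a b) < b (topRow a b) :=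
  Nat.sInf_mem (h.rows_nonempty hr)

lemma IsRibbon.bottomRow_mem (h : IsRibbon a b r) (hr : 0 < r) (hb : IsPartitionFun b) :
    a (bottomRow a b) < b (bottomRow a b) := by
  obtain ⟨i, hi⟩ := h.rows_nonempty hr
  exact Nat.sSup_mem ⟨i, hi⟩ ⟨_, fun _ => le_bottomRow hb⟩

lemma IsRibbon.topRow_le_bottomRow (h : IsRibbon a b r) (hr : 0 < r) (hb : IsPartitionFun b) :
    topRow a b ≤ bottomRow a b :=
  topRow_le (h.bottomRow_mem hr hb)

lemma IsRibbon.lt_succ_of_lt_of_lt (h : IsRibbon a b r) (hi : a i < b i)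
    (hi' : a (i + 1) < b (i + 1)) : a i < b (i + 1) := by
  obtain ⟨j, hj, hj'⟩ := exists_vertical_domino_of_reflTransGen
    (h.2.2.2.1 (i, a i) (by simpa) (i + 1, a (i + 1)) (by simpa)) le_rfl (Nat.lt_succ_self i)
  rw [mem_skewCells] at hj hj'
  exact hj.1.trans_lt hj'.2

lemma IsRibbon.lt_of_topRow_le_of_le_bottomRow (h : IsRibbon a b r) (hr : 0 < r)
    (hb : IsPartitionFun b) (h1 : topRow a b ≤ i) (h2 : i ≤ bottomRow a b) : a i < b i := by
  rcases h2.lt_or_eq with h2 | rfl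
  · obtain ⟨j, hj, hj'⟩ := exists_vertical_domino_of_reflTransGen
      (h.2.2.2.1 (topRow a b, a (topRow a b)) (by simpa using h.topRow_mem hr)
        (bottomRow a b, a (bottomRow a b)) (by simpa using h.bottomRow_mem hr hb))
      h1 h2
    rw [mem_skewCells] at hj
    exact hj.1.trans_lt hj.2
  · exact h.bottomRow_mem hr hb

lemma IsRibbon.add_one_eq (ha : IsPartitionFun a) (hb : IsPartitionFun b) (h : IsRibbon a b r)
    (hi : a i < b i) (hi' : a (i + 1) < b (i + 1)) : a i + 1 = b (i + 1) := by
  have hoverlap := h.lt_succ_of_lt_of_lt hi hi'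
  have ha' := ha.1 (Nat.le_add_right i 1)
  have hb' := hb.1 (Nat.le_add_right i 1)
  by_contra hne
  refine h.2.2.2.2 ⟨(i, a i), ?_⟩
  simp only [mem_skewCells]
  omega

lemma IsRibbon.add_one_eq_of_lt_bottomRow (hr : 0 < r) (ha : IsPartitionFun a)
    (hb : IsPartitionFun b) (h : IsRibbon a b r) (h1 : topRow a b ≤ i) (h2 : i < bottomRow a b) :
    a i + 1 = b (i + 1) :=
  h.add_one_eq ha hb (h.lt_of_topRow_le_of_le_bottomRow hr hb h1 h2.le)
    (h.lt_of_topRow_le_of_le_bottomRow hr hb (by omega) h2)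

end Rows

section Uniqueness

variable {a a' b b' : ℕ → ℕ} {k : ℕ}

lemma IsRibbon.le_of_topRow_eq (hk : 0 < k) (ha : IsPartitionFun a) (ha' : IsPartitionFun a')
    (hb : IsPartitionFun b) (h : IsRibbon a b k) (h' : IsRibbon a' b k)
    (htop : topRow a b = topRow a' b) (hbot : bottomRow a b ≤ bottomRow a' b)
    (hcorner : a' (bottomRow a b) ≤ a (bottomRow a b)) (i : ℕ) : a' i ≤ a i := by
  by_cases hi : a i < b i
  · rcases (le_bottomRow hb hi).lt_or_eq with hlt | rfl
    · have e := h.add_one_eq_of_lt_bottomRow hk ha hb (topRow_le hi) hlt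
      have e' := h'.add_one_eq_of_lt_bottomRow hk ha' hb (htop ▸ topRow_le hi) (hlt.trans_le hbot)
      omega
    · exact hcorner
  · have := h.1 i
    have := h'.1 i
    omega

lemma IsRibbon.corner_le_of_bottomRow_lt (hk : 0 < k) (ha : IsPartitionFun a)
    (ha' : IsPartitionFun a') (hb : IsPartitionFun b) (h : IsRibbon a b k) (h' : IsRibbon a' b k)
    (htop : topRow a b = topRow a' b) (hbot : bottomRow a b < bottomRow a' b) :
    a' (bottomRow a b) ≤ a (bottomRow a b) := by
  set t := bottomRow a b
  have e' : a' t + 1 = b (t + 1) :=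
    h'.add_one_eq_of_lt_bottomRow hk ha' hb (htop ▸ h.topRow_le_bottomRow hk hb) hbot
  have hout : ¬ a (t + 1) < b (t + 1) := fun hlt => by
    have := le_bottomRow hb hlt
    omega
  have := ha.1 (Nat.le_add_right t 1)
  have := h.1 (t + 1)
  omega

theorem IsRibbon.eq_of_topRow_eq (hk : 0 < k) (ha : IsPartitionFun a) (ha' : IsPartitionFun a')
    (hb : IsPartitionFun b) (h : IsRibbon a b k) (h' : IsRibbon a' b k)
    (htop : topRow a b = topRow a' b) : a = a' := by
  have eq_of_nested : ∀ {x x'}, IsPartitionFun x → IsPartitionFun x' →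
      IsRibbon x b k → IsRibbon x' b k →
      topRow x b = topRow x' b → bottomRow x b ≤ bottomRow x' b →
      x' (bottomRow x b) ≤ x (bottomRow x b) → x = x' :=
    fun hx hx' h h' htop hbot hcorner =>
      (h.eq_of_le h' (h.le_of_topRow_eq hk hx hx' hb h' htop hbot hcorner) fun _ => le_rfl).1
  rcases lt_trichotomy (bottomRow a b) (bottomRow a' b) with hlt | heq | hgt
  · exact eq_of_nested ha ha' h h' htop hlt.le
      (h.corner_le_of_bottomRow_lt hk ha ha' hb h' htop hlt)
  · rcases le_total (a' (bottomRow a b)) (a (bottomRow a b)) with hc | hc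
    · exact eq_of_nested ha ha' h h' htop heq.le hc
    · exact (eq_of_nested ha' ha h' h htop.symm heq.ge (heq ▸ hc)).symm
  · exact (eq_of_nested ha' ha h' h htop.symm hgt.le
      (h'.corner_le_of_bottomRow_lt hk ha' ha hb h htop.symm hgt)).symm

lemma IsRibbon.le_of_bottomRow_eq (hk : 0 < k) (ha : IsPartitionFun a) (hb : IsPartitionFun b)
    (hb' : IsPartitionFun b') (h : IsRibbon a b k) (h' : IsRibbon a b' k)
    (hbot : bottomRow a b = bottomRow a b') (htop : topRow a b' ≤ topRow a b)
    (hcorner : b (topRow a b) ≤ b' (topRow a b)) (i : ℕ) : b i ≤ b' i := by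
  by_cases hi : a i < b i
  · rcases (topRow_le hi).lt_or_eq with hlt | heq
    · obtain ⟨j, rfl⟩ : ∃ j, i = j + 1 := ⟨i - 1, by omega⟩
      have hj := le_bottomRow hb hi
      have e := h.add_one_eq_of_lt_bottomRow hk ha hb (by omega) hj
      have e' := h'.add_one_eq_of_lt_bottomRow hk ha hb' (by omega) (hbot ▸ hj)
      omega
    · exact heq ▸ hcorner
  · have := h.1 i
    have := h'.1 i
    omega

lemma IsRibbon.corner_le_of_topRow_lt (hk : 0 < k) (ha : IsPartitionFun a)
    (hb : IsPartitionFun b) (hb' : IsPartitionFun b') (h : IsRibbon a b k) (h' : IsRibbon a b' k)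
    (hbot : bottomRow a b = bottomRow a b') (htop : topRow a b' < topRow a b) :
    b (topRow a b) ≤ b' (topRow a b) := by
  obtain ⟨j, hj⟩ : ∃ j, topRow a b = j + 1 := ⟨topRow a b - 1, by omega⟩
  have hjb : j < bottomRow a b' := by
    have := h.topRow_le_bottomRow hk hb
    omega
  have e' : a j + 1 = b' (j + 1) := h'.add_one_eq_of_lt_bottomRow hk ha hb' (by omega) hjb
  have hout : ¬ a j < b j := fun hlt => by
    have := topRow_le hlt
    omega
  have := hb.1 (Nat.le_add_right j 1)
  have := h.1 j
  rw [hj]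
  omega

theorem IsRibbon.eq_of_bottomRow_eq (hk : 0 < k) (ha : IsPartitionFun a)
    (hb : IsPartitionFun b) (hb' : IsPartitionFun b') (h : IsRibbon a b k)
    (h' : IsRibbon a b' k) (hbot : bottomRow a b = bottomRow a b') : b = b' := by
  have eq_of_nested : ∀ {y y'}, IsPartitionFun y → IsPartitionFun y' →
      IsRibbon a y k → IsRibbon a y' k →
      bottomRow a y = bottomRow a y' → topRow a y' ≤ topRow a y →
      y (topRow a y) ≤ y' (topRow a y) → y = y' :=
    fun hy hy' h h' hbot htop hcorner =>
      (h.eq_of_le h' (fun _ => le_rfl) (h.le_of_bottomRow_eq hk ha hy hy' h' hbot htop hcorner)).2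
  rcases lt_trichotomy (topRow a b') (topRow a b) with hlt | heq | hgt
  · exact eq_of_nested hb hb' h h' hbot hlt.le
      (h.corner_le_of_topRow_lt hk ha hb hb' h' hbot hlt)
  · rcases le_total (b (topRow a b)) (b' (topRow a b)) with hc | hc
    · exact eq_of_nested hb hb' h h' hbot heq.le hc
    · exact (eq_of_nested hb' hb h' h hbot.symm heq.ge (heq ▸ hc)).symm
  · exact (eq_of_nested hb' hb h' h hbot.symm hgt.le
      (h'.corner_le_of_topRow_lt hk ha hb' hb h hbot.symm hgt)).symm

end Uniqueness

section Counting

lemma Set.finite_and_ncard_le_of_injOn {α β : Type*} {s : Set α} {t : Set β} {f : α → β}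
    {N : ℕ} (hf : MapsTo f s t) (hinj : InjOn f s) (ht : t.Finite ∧ t.ncard ≤ N) :
    s.Finite ∧ s.ncard ≤ N :=
  ⟨ht.1.of_injOn hf hinj, (ncard_le_ncard_of_injOn f hf hinj ht.1).trans ht.2⟩

def removals (lam : ℕ → ℕ) (k : ℕ) : Set (ℕ → ℕ) := {mu | IsPartitionFun mu ∧ IsRibbon mu lam k}

def additions (lam : ℕ → ℕ) (k m n : ℕ) : Set (ℕ → ℕ) :=
  {mu | IsPartitionFun mu ∧ (∀ i, mu i ≤ m) ∧ (∀ i, n ≤ i → mu i = 0) ∧ IsRibbon lam mu k}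

variable {lam : ℕ → ℕ} {k m n : ℕ}

lemma removals_finite_and_ncard_le (hk : 0 < k) (hlam : IsPartitionFun lam)
    (hn : ∀ i, n ≤ i → lam i = 0) : (removals lam k).Finite ∧ (removals lam k).ncard ≤ n := by
  refine finite_and_ncard_le_of_injOn (f := fun mu => topRow mu lam) ?_ ?_
    ⟨finite_Iio n, (ncard_Iio_nat n).le⟩
  · rintro mu ⟨-, h⟩
    have := h.topRow_mem hk
    rw [mem_Iio]
    by_contra! hle
    have := hn _ hle
    omega
  · rintro mu ⟨hmu, h⟩ mu' ⟨hmu', h'⟩ htop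
    exact h.eq_of_topRow_eq hk hmu hmu' hlam h' htop

lemma additions_finite_and_ncard_le (hk : 0 < k) (hlam : IsPartitionFun lam) :
    (additions lam k m n).Finite ∧ (additions lam k m n).ncard ≤ n := by
  refine finite_and_ncard_le_of_injOn (f := fun mu => bottomRow lam mu) ?_ ?_
    ⟨finite_Iio n, (ncard_Iio_nat n).le⟩
  · rintro mu ⟨hmu, -, hn, h⟩
    have := h.bottomRow_mem hk hmu
    rw [mem_Iio]
    by_contra! hle
    have := hn _ hle
    omega
  · rintro mu ⟨hmu, -, -, h⟩ mu' ⟨hmu', -, -, h'⟩ hbot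
    exact h.eq_of_bottomRow_eq hk hlam hmu hmu' h' hbot

lemma removals_finite_and_ncard_le_min (hk : 0 < k) (hlam : IsPartitionFun lam)
    (hm : ∀ i, lam i ≤ m) (hn : ∀ i, n ≤ i → lam i = 0) :
    (removals lam k).Finite ∧ (removals lam k).ncard ≤ min m n := by
  have hrows := removals_finite_and_ncard_le hk hlam hn
  have hcols := finite_and_ncard_le_of_injOn (s := removals lam k)
    (t := removals (conjugate lam) k) (f := conjugate)
    (fun mu ⟨hmu, h⟩ => ⟨hmu.conjugate, h.conjugate hmu hlam⟩)
    (conjugate_injOn.mono fun _ hmu => hmu.1)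
    (removals_finite_and_ncard_le hk hlam.conjugate fun _ => conjugate_eq_zero hm)
  exact ⟨hrows.1, le_min hcols.2 hrows.2⟩

lemma additions_finite_and_ncard_le_min (hk : 0 < k) (hlam : IsPartitionFun lam) :
    (additions lam k m n).Finite ∧ (additions lam k m n).ncard ≤ min m n := by
  have hrows := additions_finite_and_ncard_le (m := m) (n := n) hk hlam
  have hcols := finite_and_ncard_le_of_injOn (s := additions lam k m n)
    (t := additions (conjugate lam) k n m) (f := conjugate)
    (fun mu ⟨hmu, hm, hn, h⟩ => ⟨hmu.conjugate, conjugate_le hn, fun _ => conjugate_eq_zero hm,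
      h.conjugate hlam hmu⟩)
    (conjugate_injOn.mono fun _ hmu => hmu.1)
    (additions_finite_and_ncard_le (m := n) (n := m) hk hlam.conjugate)
  exact ⟨hrows.1, le_min hcols.2 hrows.2⟩

end Counting

/-- Fix `k > 0` and a partition `λ` contained in the rectangle `⟨mⁿ⟩`. Then
there are at most `min m n` partitions `μ` with `λ\μ` a `k`-ribbon, and at most
`min m n` partitions `μ ⊆ ⟨mⁿ⟩` with `μ\λ` a `k`-ribbon. -/
theorem ribbon_count_le (k m n : ℕ) (hk : 0 < k) (lam : ℕ → ℕ)
    (hlam : IsPartitionFun lam) (hlam_m : ∀ i, lam i ≤ m) (hlam_n : ∀ i, n ≤ i → lam i = 0) :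
    ({mu : ℕ → ℕ | IsPartitionFun mu ∧ IsRibbon mu lam k}.Finite ∧
      {mu : ℕ → ℕ | IsPartitionFun mu ∧ IsRibbon mu lam k}.ncard ≤ min m n) ∧
    ({mu : ℕ → ℕ | IsPartitionFun mu ∧ (∀ i, mu i ≤ m) ∧ (∀ i, n ≤ i → mu i = 0) ∧
        IsRibbon lam mu k}.Finite ∧
      {mu : ℕ → ℕ | IsPartitionFun mu ∧ (∀ i, mu i ≤ m) ∧ (∀ i, n ≤ i → mu i = 0) ∧
        IsRibbon lam mu k}.ncard ≤ min m n) :=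
  ⟨removals_finite_and_ncard_le_min hk hlam hlam_m hlam_n,
    additions_finite_and_ncard_le_min hk hlam⟩
end

section
/- Let n, r be positive integers and μ a partition of length at most n, and for 1 ≤ q ≤ n let μ[q] be the sequence obtained from μ by adding r to its q-th entry. Then a partition λ of length at most n satisfies that λ\μ is an r-ribbon if and only if there exists q with 1 ≤ q ≤ n such that the sequence λ + ρ_n is a permutation of μ[q] + ρ_n, where ρ_n = (n−1, n−2, ..., 1, 0). Moreover, in that case the sign of the sorting permutation equals (−1)^{height(λ\μ)}. -/
open Function Relation

def AdjIn (S : Set (ℕ × ℕ)) (u v : ℕ × ℕ) : Prop := u ∈ S ∧ v ∈ S ∧ AdjCell u v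

def SquareFree (S : Set (ℕ × ℕ)) : Prop :=
  ¬∃ c : ℕ × ℕ, c ∈ S ∧ (c.1 + 1, c.2) ∈ S ∧ (c.1, c.2 + 1) ∈ S ∧ (c.1 + 1, c.2 + 1) ∈ S

section Cells

variable {S : Set (ℕ × ℕ)} {mu lam : ℕ → ℕ}

theorem mem_skewCells_s8 {c : ℕ × ℕ} : c ∈ skewCells mu lam ↔ mu c.1 ≤ c.2 ∧ c.2 < lam c.1 := by
  simp only [skewCells, cells, Set.mem_sdiff, Set.mem_ofPred_eq, not_lt]
  exact and_comm

theorem AdjIn.symm {u v : ℕ × ℕ} (h : AdjIn S u v) : AdjIn S v u := by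
  obtain ⟨hu, hv, hadj⟩ := h
  exact ⟨hv, hu, by unfold AdjCell at *; omega⟩

theorem reflTransGen_adjIn_symm {u v : ℕ × ℕ} (h : ReflTransGen (AdjIn S) u v) :
    ReflTransGen (AdjIn S) v u := by
  induction h with
  | refl => exact .refl
  | tail _ hxy ih => exact ih.head hxy.symm

theorem exists_vertical_adjIn_of_reflTransGen {u v : ℕ × ℕ} (h : ReflTransGen (AdjIn S) u v)
    {i : ℕ} (hu : u.1 ≤ i) (hv : i < v.1) : ∃ c, (i, c) ∈ S ∧ (i + 1, c) ∈ S := by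
  induction h with
  | refl => omega
  | @tail x y _ hxy ih =>
    by_cases hx : x.1 ≤ i
    · obtain ⟨hxS, hyS, hadj⟩ := hxy
      obtain ⟨x1, x2⟩ := x
      obtain ⟨y1, y2⟩ := y
      have hxy : y1 = i + 1 ∧ x1 = i ∧ y2 = x2 := by unfold AdjCell at hadj; simp only at hadj hx; omega
      obtain ⟨rfl, rfl, rfl⟩ := hxy
      exact ⟨y2, hxS, hyS⟩
    · exact ih (by omega)

theorem reflTransGen_adjIn_skewCells_of_le {i c d : ℕ} (hc : (i, c) ∈ skewCells mu lam)
    (hd : (i, d) ∈ skewCells mu lam) (hcd : c ≤ d) :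
    ReflTransGen (AdjIn (skewCells mu lam)) (i, c) (i, d) := by
  induction d, hcd using Nat.le_induction with
  | base => exact .refl
  | succ d hcd ih =>
    have hd' : (i, d) ∈ skewCells mu lam := by simp only [mem_skewCells_s8] at *; omega
    exact (ih hd').tail ⟨hd', hd, .inl ⟨rfl, .inl rfl⟩⟩

theorem reflTransGen_adjIn_skewCells_row {i c d : ℕ} (hc : (i, c) ∈ skewCells mu lam)
    (hd : (i, d) ∈ skewCells mu lam) : ReflTransGen (AdjIn (skewCells mu lam)) (i, c) (i, d) := by
  rcases le_total c d with hcd | hdc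
  · exact reflTransGen_adjIn_skewCells_of_le hc hd hcd
  · exact reflTransGen_adjIn_symm (reflTransGen_adjIn_skewCells_of_le hd hc hdc)

/-- Otherwise the cells `(i, μ i)`, `(i, μ i + 1)` and the two below them form a square. -/
theorem apply_succ_le_of_squareFree (hmu : Antitone mu) (hlam : Antitone lam)
    (hsq : SquareFree (skewCells mu lam)) (i : ℕ) : lam (i + 1) ≤ mu i + 1 := by
  by_contra! hlt
  have hmu' := hmu (Nat.le_add_right i 1)
  have hlam' := hlam (Nat.le_add_right i 1)
  exact hsq ⟨(i, mu i), by simp only [mem_skewCells_s8]; omega⟩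

end Cells

/-- `λ \ μ` occupies exactly the rows `a, …, b`, and consecutive rows share exactly one column. -/
structure IsRibbonRows (mu lam : ℕ → ℕ) (a b : ℕ) : Prop where
  le : a ≤ b
  eq_of_notMem : ∀ i ∉ Set.Icc a b, lam i = mu i
  lt_of_mem : ∀ i ∈ Set.Icc a b, mu i < lam i
  succ_eq : ∀ i ∈ Set.Ico a b, lam (i + 1) = mu i + 1

namespace IsRibbonRows

variable {mu lam : ℕ → ℕ} {a b : ℕ}

/-- The rows below the top one are nonempty because they overlap the row above them. -/
theorem of_succ_eq (hmu : Antitone mu) (hab : a ≤ b) (ha : mu a < lam a)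
    (hout : ∀ i ∉ Set.Icc a b, lam i = mu i)
    (hsucc : ∀ i ∈ Set.Ico a b, lam (i + 1) = mu i + 1) : IsRibbonRows mu lam a b where
  le := hab
  eq_of_notMem := hout
  lt_of_mem i hi := by
    obtain ⟨hai, hib⟩ := hi
    rcases hai.eq_or_lt with rfl | hai
    · exact ha
    · obtain ⟨j, rfl⟩ : ∃ j, i = j + 1 := ⟨i - 1, by omega⟩
      have := hmu (Nat.le_add_right j 1)
      rw [hsucc j ⟨by omega, by omega⟩]
      omega
  succ_eq := hsucc

theorem le_apply (h : IsRibbonRows mu lam a b) (i : ℕ) : mu i ≤ lam i := by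
  by_cases hi : i ∈ Set.Icc a b
  · exact (h.lt_of_mem i hi).le
  · exact (h.eq_of_notMem i hi).ge

theorem lt_iff (h : IsRibbonRows mu lam a b) {i : ℕ} : mu i < lam i ↔ i ∈ Set.Icc a b := by
  refine ⟨fun hi => ?_, h.lt_of_mem i⟩
  by_contra hi'
  exact hi.ne' (h.eq_of_notMem i hi')

theorem ribbonHeight_eq (h : IsRibbonRows mu lam a b) : ribbonHeight mu lam = b - a := by
  have hrows : {i | mu i < lam i} = ↑(Finset.Icc a b) := by ext; simp [h.lt_iff]
  rw [ribbonHeight, hrows, Set.ncard_coe_finset, Nat.card_Icc]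
  omega

theorem skewCells_eq (h : IsRibbonRows mu lam a b) :
    skewCells mu lam = ↑((Finset.Icc a b).biUnion fun i => {i} ×ˢ Finset.Ico (mu i) (lam i)) := by
  ext ⟨i, c⟩
  simp only [mem_skewCells_s8, Finset.coe_biUnion, Set.mem_iUnion, Finset.mem_coe,
    Finset.mem_product, Finset.mem_singleton, Finset.mem_Ico, exists_prop]
  constructor
  · intro hc
    exact ⟨i, Finset.mem_Icc.mpr (h.lt_iff.mp (by omega)), rfl, hc⟩
  · rintro ⟨_, -, rfl, hc⟩
    exact hc

theorem sum_sub_add (h : IsRibbonRows mu lam a b) :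
    ∑ i ∈ Finset.Icc a b, (lam i - mu i) + mu b + a = lam a + b := by
  obtain ⟨hab, -, hlt, hsucc⟩ := h
  induction b, hab using Nat.le_induction with
  | base =>
    have := hlt a ⟨le_rfl, le_rfl⟩
    simp only [Finset.Icc_self, Finset.sum_singleton]
    omega
  | succ b hab ih =>
    rw [Finset.sum_Icc_succ_top (by omega)]
    have := hsucc b ⟨hab, by omega⟩
    have := hlt (b + 1) ⟨by omega, le_rfl⟩
    have := ih (fun i hi => hlt i ⟨hi.1, by have := hi.2; omega⟩)
      (fun i hi => hsucc i ⟨hi.1, by have := hi.2; omega⟩)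
    omega

theorem ncard_skewCells_add (h : IsRibbonRows mu lam a b) :
    (skewCells mu lam).ncard + mu b + a = lam a + b := by
  rw [h.skewCells_eq, Set.ncard_coe_finset, Finset.card_biUnion, ← h.sum_sub_add]
  · simp
  · intro i _ j _ hij
    simp only [Finset.disjoint_left, Finset.mem_product, Finset.mem_singleton]
    rintro _ ⟨rfl, -⟩ ⟨rfl, -⟩
    exact hij rfl

theorem reflTransGen_adjIn_bottom (h : IsRibbonRows mu lam a b) (hmu : Antitone mu) {i : ℕ}
    (hai : a ≤ i) (hib : i ≤ b) :
    ReflTransGen (AdjIn (skewCells mu lam)) (i, mu i) (b, mu b) := by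
  refine Nat.decreasingInduction
    (motive := fun i _ => a ≤ i → ReflTransGen (AdjIn (skewCells mu lam)) (i, mu i) (b, mu b))
    (fun i hib ih hai => ?_) (fun _ => .refl) hib hai
  have hi : (i, mu i) ∈ skewCells mu lam := mem_skewCells_s8.mpr ⟨le_rfl, h.lt_of_mem i ⟨hai, hib.le⟩⟩
  have hsucc := h.succ_eq i ⟨hai, hib⟩
  have hbelow : (i + 1, mu i) ∈ skewCells mu lam :=
    mem_skewCells_s8.mpr ⟨hmu (Nat.le_add_right i 1), by simp [hsucc]⟩
  have hbelow' : (i + 1, mu (i + 1)) ∈ skewCells mu lam :=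
    mem_skewCells_s8.mpr ⟨le_rfl, h.lt_of_mem (i + 1) ⟨by omega, hib⟩⟩
  exact ReflTransGen.head ⟨hi, hbelow, .inr ⟨rfl, .inl rfl⟩⟩
    ((reflTransGen_adjIn_skewCells_row hbelow hbelow').trans (ih (by omega)))

theorem connectedCells (h : IsRibbonRows mu lam a b) (hmu : Antitone mu) :
    ConnectedCells (skewCells mu lam) := by
  have to_bottom : ∀ u ∈ skewCells mu lam, ReflTransGen (AdjIn (skewCells mu lam)) u (b, mu b) := by
    rintro ⟨i, c⟩ hu
    obtain ⟨hai, hib⟩ := (h.lt_iff (i := i)).mp (by simp only [mem_skewCells_s8] at hu; omega)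
    have hi : (i, mu i) ∈ skewCells mu lam := mem_skewCells_s8.mpr ⟨le_rfl, h.lt_of_mem i ⟨hai, hib⟩⟩
    exact (reflTransGen_adjIn_skewCells_row hu hi).trans (h.reflTransGen_adjIn_bottom hmu hai hib)
  intro u hu v hv
  exact (to_bottom u hu).trans (reflTransGen_adjIn_symm (to_bottom v hv))

theorem squareFree (h : IsRibbonRows mu lam a b) : SquareFree (skewCells mu lam) := by
  rintro ⟨⟨i, c⟩, h00, h10, -, h11⟩
  simp only [mem_skewCells_s8] at h00 h10 h11
  have hi := h.lt_iff.mp (by omega : mu i < lam i)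
  have hi' := h.lt_iff.mp (by omega : mu (i + 1) < lam (i + 1))
  have := h.succ_eq i ⟨hi.1, by have := hi'.2; omega⟩
  omega

theorem isRibbon (h : IsRibbonRows mu lam a b) (hmu : Antitone mu) {r : ℕ}
    (hsize : lam a + b = mu b + a + r) : IsRibbon mu lam r := by
  have hcard := h.ncard_skewCells_add
  refine ⟨h.le_apply, ?_, by omega, h.connectedCells hmu, h.squareFree⟩
  rw [h.skewCells_eq]
  exact Finset.finite_toSet _

end IsRibbonRows

theorem IsRibbon.exists_isRibbonRows {mu lam : ℕ → ℕ} {r : ℕ} (hr : 0 < r) (hmu : Antitone mu)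
    (hlam : Antitone lam) (h : IsRibbon mu lam r) :
    ∃ a b, IsRibbonRows mu lam a b ∧ lam a + b = mu b + a + r := by
  obtain ⟨hle, hfin, hcard, hconn, hsq⟩ := h
  set T := {i | mu i < lam i}
  have hTfin : T.Finite := (hfin.image Prod.fst).subset fun i hi =>
    ⟨(i, mu i), mem_skewCells_s8.mpr ⟨le_rfl, hi⟩, rfl⟩
  have hTne : T.Nonempty := by
    obtain ⟨⟨i, c⟩, hc⟩ := Set.nonempty_of_ncard_ne_zero (by omega : (skewCells mu lam).ncard ≠ 0)
    exact ⟨i, by rw [mem_skewCells_s8] at hc; exact lt_of_le_of_lt hc.1 hc.2⟩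
  set a := sInf T
  set b := sSup T
  have ha : mu a < lam a := Nat.sInf_mem hTne
  have hb : mu b < lam b := Nat.sSup_mem hTne hTfin.bddAbove
  have hsucc : ∀ i ∈ Set.Ico a b, lam (i + 1) = mu i + 1 := by
    rintro i ⟨hai, hib⟩
    obtain ⟨c, hc, hc'⟩ := exists_vertical_adjIn_of_reflTransGen
      (hconn (a, mu a) (mem_skewCells_s8.mpr ⟨le_rfl, ha⟩) (b, mu b) (mem_skewCells_s8.mpr ⟨le_rfl, hb⟩))
      (i := i) hai hib
    simp only [mem_skewCells_s8] at hc hc'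
    have := apply_succ_le_of_squareFree hmu hlam hsq i
    omega
  have hout : ∀ i ∉ Set.Icc a b, lam i = mu i := by
    intro i hi
    refine le_antisymm (not_lt.mp fun hi' => hi ⟨Nat.sInf_le hi', ?_⟩) (hle i)
    exact le_csSup hTfin.bddAbove hi'
  have hab : a ≤ b := Nat.sInf_le hb
  have hrows := IsRibbonRows.of_succ_eq hmu hab ha hout hsucc
  exact ⟨a, b, hrows, by have := hrows.ncard_skewCells_add; omega⟩

theorem Fin.val_cycleIcc {n : ℕ} [NeZero n] {i j : Fin n} (hij : i ≤ j) (k : Fin n) :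
    (Fin.cycleIcc i j k : ℕ) =
      if (k : ℕ) < i ∨ (j : ℕ) < k then (k : ℕ) else if (k : ℕ) = j then (i : ℕ) else k + 1 := by
  rcases lt_or_ge k i with hki | hik
  · rw [Fin.cycleIcc_of_lt hki, if_pos (Or.inl (Fin.lt_def.mp hki))]
  rcases lt_or_ge j k with hjk | hkj
  · rw [Fin.cycleIcc_of_gt hjk, if_pos (Or.inr (Fin.lt_def.mp hjk))]
  rw [Fin.le_def] at hik hkj
  rw [if_neg (by omega)]
  rcases eq_or_ne k j with rfl | hkj'
  · rw [Fin.cycleIcc_of_last hij, if_pos rfl]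
  · have hkj'' := Fin.val_ne_of_ne hkj'
    rw [Fin.cycleIcc_of_ge_of_lt hik (Fin.lt_def.mpr (by omega)), if_neg hkj'',
      Fin.val_add_one_of_lt' (by omega)]

/-- Inserting a raised entry `v ≥ h q` into the antitone sequence `h` at the first position
`a` where `h a ≤ v` keeps it antitone. -/
theorem Antitone.exists_antitone_update_comp_cycleIcc_inv {α : Type*} [LinearOrder α] {n : ℕ}
    {h : Fin n → α} (hh : Antitone h) (q : Fin n) {v : α} (hv : h q ≤ v) :
    ∃ a ≤ q, Antitone (update h q v ∘ ⇑(Fin.cycleIcc a q)⁻¹) := by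
  have : NeZero n := NeZero.of_pos q.pos
  classical
  obtain ⟨a, ha, hmin⟩ := (Finset.univ.filter fun j => h j ≤ v).exists_min_image id ⟨q, by simpa⟩
  simp only [Finset.mem_filter, Finset.mem_univ, true_and, id] at ha hmin
  have haq : a ≤ q := hmin q hv
  refine ⟨a, haq, fun i j hij => ?_⟩
  obtain ⟨x, rfl⟩ := (Fin.cycleIcc a q).surjective i
  obtain ⟨y, rfl⟩ := (Fin.cycleIcc a q).surjective j
  simp only [comp_apply, Equiv.Perm.inv_def, Equiv.symm_apply_apply]
  have hx := Fin.val_cycleIcc haq x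
  have hy := Fin.val_cycleIcc haq y
  rw [Fin.le_def] at hij haq
  rcases eq_or_ne q x with rfl | hxq <;> rcases eq_or_ne q y with rfl | hyq
  · exact le_rfl
  · rw [update_self, update_of_ne hyq.symm]
    refine (hh (Fin.le_def.mpr ?_)).trans ha
    have := Fin.val_ne_of_ne hyq
    split_ifs at hx hy <;> omega
  · rw [update_self, update_of_ne hxq.symm]
    refine (not_le.mp fun hxv => ?_).le
    have := Fin.le_def.mp (hmin x hxv)
    have := Fin.val_ne_of_ne hxq
    split_ifs at hx hy <;> omega
  · rw [update_of_ne hxq.symm, update_of_ne hyq.symm]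
    refine hh (Fin.le_def.mpr ?_)
    have := Fin.val_ne_of_ne hxq
    have := Fin.val_ne_of_ne hyq
    split_ifs at hx hy <;> omega

/-- The entries of `f + ρ_n`, with `ρ_n = (n - 1, …, 1, 0)`. -/
def addRho (n : ℕ) (f : ℕ → ℕ) (i : Fin n) : ℕ := f i + (n - 1 - i)

section AddRho

variable {n r : ℕ} {mu lam : ℕ → ℕ}

theorem strictAnti_addRho (hf : Antitone lam) : StrictAnti (addRho n lam) := fun i j hij => by
  have := hf (Fin.le_def.mp hij.le)
  have := Fin.lt_def.mp hij
  have := j.isLt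
  simp only [addRho]
  omega

theorem update_addRho (q : Fin n) :
    update (addRho n mu) q (addRho n mu q + r) = addRho n (update mu q (mu q + r)) := by
  funext i
  rcases eq_or_ne i q with rfl | hiq
  · simp only [update_self, addRho]
    omega
  · rw [update_of_ne hiq]
    simp only [addRho, update_of_ne (Fin.val_ne_of_ne hiq)]

theorem isRibbonRows_iff_addRho_comp_cycleIcc (hr : 0 < r) (hmu : Antitone mu)
    (hlam : Antitone lam) (hmulen : ∀ i, n ≤ i → mu i = 0) (hlamlen : ∀ i, n ≤ i → lam i = 0)
    {a b : Fin n} (hab : a ≤ b) :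
    IsRibbonRows mu lam a b ∧ lam a + b = mu b + a + r ↔
      addRho n lam ∘ Fin.cycleIcc a b = addRho n (update mu b (mu b + r)) := by
  have : NeZero n := NeZero.of_pos b.pos
  have hab' := Fin.le_def.mp hab
  simp only [funext_iff, comp_apply, addRho, update_apply, Fin.val_cycleIcc hab]
  constructor
  · rintro ⟨h, hsize⟩ k
    have := k.isLt
    split_ifs with hout hkb
    · omega
    · rw [h.eq_of_notMem k (by rw [Set.mem_Icc]; omega)]
    · omega
    · rw [h.succ_eq k ⟨by omega, by omega⟩]
      omega
  · intro heq
    have hsize : lam a + b = mu b + a + r := by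
      have := heq b
      simp only [lt_irrefl, or_false, if_true] at this
      split_ifs at this <;> omega
    have hout : ∀ i ∉ Set.Icc (a : ℕ) b, lam i = mu i := by
      intro i hi
      rw [Set.mem_Icc] at hi
      by_cases hin : i < n
      · have := heq ⟨i, hin⟩
        simp only at this
        split_ifs at this <;> omega
      · rw [hmulen i (by omega), hlamlen i (by omega)]
    have hsucc : ∀ i ∈ Set.Ico (a : ℕ) b, lam (i + 1) = mu i + 1 := by
      rintro i ⟨hai, hib⟩
      have := heq ⟨i, by omega⟩
      simp only at this
      split_ifs at this <;> omega
    have ha : mu a < lam a := by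
      rcases hab'.eq_or_lt with hab | hab
      · rw [hab] at hsize ⊢
        omega
      · have := hlam (Nat.le_add_right (a : ℕ) 1)
        have := hsucc a ⟨le_rfl, hab⟩
        omega
    exact ⟨.of_succ_eq hmu hab' ha hout hsucc, hsize⟩

theorem addRho_eq_comp_iff (hr : 0 < r) (hmu : Antitone mu) (hlam : Antitone lam)
    (hmulen : ∀ i, n ≤ i → mu i = 0) (hlamlen : ∀ i, n ≤ i → lam i = 0) (q : Fin n)
    (σ : Equiv.Perm (Fin n)) :
    (∀ i, addRho n lam i = addRho n (update mu q (mu q + r)) (σ i)) ↔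
      ∃ a ≤ q, σ = (Fin.cycleIcc a q)⁻¹ ∧ IsRibbonRows mu lam a q ∧ lam a + q = mu q + a + r := by
  set g := addRho n (update mu q (mu q + r))
  have hrows {a : Fin n} (haq : a ≤ q) :
      IsRibbonRows mu lam a q ∧ lam a + q = mu q + a + r ↔ addRho n lam ∘ Fin.cycleIcc a q = g :=
    isRibbonRows_iff_addRho_comp_cycleIcc hr hmu hlam hmulen hlamlen haq
  constructor
  · intro h
    have hσ : addRho n lam = g ∘ σ := funext h
    obtain ⟨a, haq, hanti⟩ :=
      (strictAnti_addRho hmu).antitone.exists_antitone_update_comp_cycleIcc_inv q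
        (le_add_right le_rfl : addRho n mu q ≤ addRho n mu q + r)
    rw [update_addRho] at hanti
    have hg : g ∘ σ = g ∘ ⇑(Fin.cycleIcc a q)⁻¹ :=
      Tuple.unique_antitone (hσ ▸ (strictAnti_addRho hlam).antitone) hanti
    have hginj : Injective g :=
      Injective.of_comp_right (hσ ▸ (strictAnti_addRho hlam).injective) σ.surjective
    obtain rfl : σ = (Fin.cycleIcc a q)⁻¹ := DFunLike.coe_injective (hginj.comp_left hg)
    refine ⟨a, haq, rfl, (hrows haq).mpr (funext fun k => ?_)⟩
    simpa using h (Fin.cycleIcc a q k)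
  · rintro ⟨a, haq, rfl, hrib⟩ i
    simpa using congrFun ((hrows haq).mp hrib) ((Fin.cycleIcc a q)⁻¹ i)

end AddRho

/-- Let `μ`, `λ` be partitions of length at most `n` and `r > 0`; let
`μ[q]` be `μ` with `r` added to its `q`-th entry and `ρ_n = (n-1, …, 1, 0)`.
Then `λ\μ` is an `r`-ribbon iff for some `q` the sequence `λ + ρ_n` is a
permutation of `μ[q] + ρ_n`; and in that case the sign of the sorting
permutation is `(-1)^{height(λ\μ)}`. -/
theorem ribbon_iff_sort (n r : ℕ) (hr : 0 < r)
    (mu : ℕ → ℕ) (hmu : IsPartitionFun mu) (hmulen : ∀ i, n ≤ i → mu i = 0)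
    (lam : ℕ → ℕ) (hlam : IsPartitionFun lam) (hlamlen : ∀ i, n ≤ i → lam i = 0) :
    (IsRibbon mu lam r ↔
      ∃ q : Fin n, ∃ σ : Equiv.Perm (Fin n), ∀ i : Fin n,
        lam (i : ℕ) + (n - 1 - (i : ℕ)) =
          Function.update mu (q : ℕ) (mu (q : ℕ) + r) ((σ i : ℕ)) + (n - 1 - (σ i : ℕ))) ∧
    ∀ (q : Fin n) (σ : Equiv.Perm (Fin n)),
      (∀ i : Fin n,
        lam (i : ℕ) + (n - 1 - (i : ℕ)) =
          Function.update mu (q : ℕ) (mu (q : ℕ) + r) ((σ i : ℕ)) + (n - 1 - (σ i : ℕ))) →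
      (Equiv.Perm.sign σ : ℤ) = (-1) ^ ribbonHeight mu lam := by
  have hsort := addRho_eq_comp_iff hr hmu.1 hlam.1 hmulen hlamlen
  refine ⟨⟨fun h => ?_, fun ⟨q, σ, heq⟩ => ?_⟩, fun q σ heq => ?_⟩
  · obtain ⟨a, b, hrows, hsize⟩ := h.exists_isRibbonRows hr hmu.1 hlam.1
    have hb : b < n := by
      by_contra! hb
      have := hrows.lt_of_mem b ⟨hrows.le, le_rfl⟩
      rw [hlamlen b hb] at this
      omega
    exact ⟨⟨b, hb⟩, _,
      (hsort ⟨b, hb⟩ _).mpr ⟨⟨a, hrows.le.trans_lt hb⟩, hrows.le, rfl, hrows, hsize⟩⟩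
  · obtain ⟨a, -, -, hrows, hsize⟩ := (hsort q σ).mp heq
    exact hrows.isRibbon hmu.1 hsize
  · obtain ⟨a, haq, rfl, hrows, -⟩ := (hsort q σ).mp heq
    rw [Equiv.Perm.sign_inv, Fin.sign_cycleIcc_of_le haq, hrows.ribbonHeight_eq]
    push_cast
    rfl
end

section
/- Let X and Y be sets of n and m variables respectively, and let λ be a partition containing the box with coordinates (m+1, n+1) (i.e., λ has more than m parts of size greater than n). Then LS_λ(X;Y) = 0. -/
/-!
Under the specialization `p_k ↦ p_k(X) + (-1)^(k-1) p_k(Y)`, the generating series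
`H(t) = ∑ h_N t^N` has Euler logarithmic derivative `t H'/H = ∑_k (p_k(X) + (-1)^(k-1) p_k(Y)) t^k`
(this is Newton's identity `N h_N = ∑ p_k h_{N-k}`, obtained from the `z_λ`-expansion of `h_N` by
removing one part of `λ`). Comparing logarithmic derivatives gives
`H(t) ∏ᵢ (1 - xᵢ t) = ∏ⱼ (1 + yⱼ t)`, a polynomial of degree `m`. Hence the `h_M` with `M > m`
obey a linear recurrence of order `n`, so every vector `(h_{K+j})_j` with `K > m - n` lies in the
span of the `n` vectors with `m - n < K ≤ m`. The first `n + 1` rows of the Jacobi–Trudi matrix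
are of this form, since `λ_i - i ≥ λ_n - n > m - n` for `i ≤ n`; they are linearly dependent, and
the determinant vanishes.
-/

open MvPolynomial

/-- The ring of symmetric functions, realized as the polynomial ring
`ℚ[p₁, p₂, …]` in the power sum symmetric functions. The variable indexed by
`k : ℕ+` is the power sum `p_k`. -/
abbrev SymF : Type := MvPolynomial ℕ+ ℚ

/-- The power sum `p_λ` associated to a partition `P` of `n`. -/
noncomputable def pProd {n : ℕ} (P : Nat.Partition n) : SymF :=
  (P.parts.attach.map fun i => (MvPolynomial.X ⟨i.1, P.parts_pos i.2⟩ : SymF)).prod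

/-- `z_λ = ∏ i, i^{m_i(λ)} m_i(λ)!` for a partition `P` of `n`. -/
noncomputable def zOf {n : ℕ} (P : Nat.Partition n) : ℚ :=
  (P.parts.prod : ℚ) * ∏ i ∈ P.parts.toFinset, (Nat.factorial (P.parts.count i) : ℚ)

/-- The `n`-th complete homogeneous symmetric function, expressed in the power
sums via the classical formula `h_n = ∑_{λ ⊢ n} z_λ⁻¹ p_λ`. -/
noncomputable def hSym (n : ℕ) : SymF := ∑ P : Nat.Partition n, (zOf P)⁻¹ • pProd P

/-- `h_k` for `k : ℤ`, with `h_k = 0` for negative `k`. -/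
noncomputable def hZ (k : ℤ) : SymF := if 0 ≤ k then hSym k.toNat else 0

/-- The Schur function given by the Jacobi–Trudi determinant
`s_λ = det (h_{λ_i - i + j})_{1 ≤ i,j ≤ l}`. -/
noncomputable def schurSym (l : ℕ) (lam : ℕ → ℕ) : SymF :=
  Matrix.det (Matrix.of fun i j : Fin l =>
    hZ ((lam (i : ℕ) : ℤ) - ((i : ℕ) : ℤ) + ((j : ℕ) : ℤ)))

/-- The length of a partition given as a function `ℕ → ℕ`. -/
noncomputable def plen (lam : ℕ → ℕ) : ℕ := sInf {N | ∀ i, N ≤ i → lam i = 0}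

/-- The Schur function `s_λ` in the ring of symmetric functions. -/
noncomputable def schurF (lam : ℕ → ℕ) : SymF := schurSym (plen lam) lam

/-- The Littlewood–Schur function `LS_λ(X;Y) = ∑_{μ,ν} c^λ_{μν} s_μ(X) s_{ν'}(Y)`,
obtained from the Schur function `s_λ` by the specialization of the ring of
symmetric functions sending `p_k ↦ p_k(X) + (-1)^{k-1} p_k(Y)`
(i.e. `s_λ(ρ^α_X ∪ ρ^β_Y)`). -/
noncomputable def LSC {a b : ℕ} (lam : ℕ → ℕ) (x : Fin a → ℂ) (y : Fin b → ℂ) : ℂ :=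
  MvPolynomial.aeval
    (fun k : ℕ+ => (∑ i, x i ^ (k : ℕ)) + (-1 : ℂ) ^ ((k : ℕ) - 1) * ∑ j, y j ^ (k : ℕ))
    (schurF lam)

open Finset

namespace PowerSeries

section CommRing

variable {R S : Type*} [CommRing R] [CommRing S]

theorem derivative_map (f : R →+* S) (F : R⟦X⟧) :
    d⁄dX S (map f F) = map f (d⁄dX R F) := by
  ext n
  simp [coeff_derivative]

def HasEulerLogDeriv (F Q : R⟦X⟧) : Prop := X * d⁄dX R F = F * Q

theorem HasEulerLogDeriv.mul {F G P Q : R⟦X⟧} (hF : HasEulerLogDeriv F P)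
    (hG : HasEulerLogDeriv G Q) : HasEulerLogDeriv (F * G) (P + Q) := by
  unfold HasEulerLogDeriv at *
  rw [Derivation.leibniz, smul_eq_mul, smul_eq_mul]
  linear_combination G * hF + F * hG

theorem HasEulerLogDeriv.prod {ι : Type*} (s : Finset ι) {F Q : ι → R⟦X⟧}
    (h : ∀ i ∈ s, HasEulerLogDeriv (F i) (Q i)) :
    HasEulerLogDeriv (∏ i ∈ s, F i) (∑ i ∈ s, Q i) := by
  classical
  induction s using Finset.induction_on with
  | empty => simp [HasEulerLogDeriv]
  | insert i s hi ih =>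
    rw [Finset.prod_insert hi, Finset.sum_insert hi]
    exact (h i (Finset.mem_insert_self i s)).mul
      (ih fun j hj => h j (Finset.mem_insert_of_mem hj))

theorem HasEulerLogDeriv.map {F Q : R⟦X⟧} (h : HasEulerLogDeriv F Q) (f : R →+* S) :
    HasEulerLogDeriv (map f F) (map f Q) := by
  unfold HasEulerLogDeriv at *
  rw [derivative_map, ← map_X f, ← map_mul, h, map_mul]

theorem hasEulerLogDeriv_one_add_C_mul_X (c : R) :
    HasEulerLogDeriv (1 + C c * X) (X * mk fun k => c * (-c) ^ k) := by
  have hgeom : (1 + C c * X) * mk (fun k => c * (-c) ^ k) = C c := by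
    ext n
    rcases n with _ | n
    · simp
    · simp [add_mul, mul_assoc, pow_succ]
      ring
  simp only [HasEulerLogDeriv, map_add, derivative_one, Derivation.leibniz, derivative_C,
    derivative_X, smul_eq_mul]
  rw [mul_left_comm, hgeom]
  ring

theorem coeff_prod_one_add_C_mul_X_eq_zero {ι : Type*} (s : Finset ι) (c : ι → R) {N : ℕ}
    (hN : s.card < N) : coeff N (∏ i ∈ s, (1 + C (c i) * X)) = 0 := by
  classical
  induction s using Finset.induction_on generalizing N with
  | empty => simp [coeff_one]; omega
  | insert i s hi ih =>
    rw [Finset.card_insert_of_notMem hi] at hN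
    obtain ⟨N, rfl⟩ : ∃ N', N = N' + 1 := ⟨N - 1, by omega⟩
    rw [Finset.prod_insert hi, add_mul, one_mul, mul_assoc, map_add, coeff_C_mul,
      coeff_succ_X_mul, ih (by omega), ih (by omega), mul_zero, add_zero]

theorem coeff_mul_eq_sum_range {F G : R⟦X⟧} {n : ℕ} (hG : ∀ r, n < r → coeff r G = 0)
    (f : ℤ → R) (hf : ∀ k : ℕ, f k = coeff k F) (hf_neg : ∀ k < 0, f k = 0) (N : ℕ) :
    coeff N (G * F) = ∑ r ∈ range (n + 1), coeff r G * f (N - r) := by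
  have hsub {a : ℕ} (ha : a ≤ N + n + 1) : range a ⊆ range (N + n + 1) :=
    Finset.range_subset_range.mpr ha
  rw [coeff_mul, Finset.Nat.sum_antidiagonal_eq_sum_range_succ (fun r i => coeff r G * coeff i F),
    Finset.sum_congr rfl fun r hr => by
      rw [← hf, Nat.cast_sub (by simpa [Nat.lt_succ_iff] using hr)],
    Finset.sum_subset (hsub (a := N + 1) (by omega)) fun r _ hrN => by
      rw [hf_neg _ (by simp at hrN; omega), mul_zero],
    Finset.sum_subset (hsub (a := n + 1) (by omega)) fun r _ hrn => by
      rw [hG r (by simpa using hrn), zero_mul]]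

end CommRing

theorem HasEulerLogDeriv.eq {K : Type*} [Field K] [CharZero K] {F G Q : K⟦X⟧}
    (hF : HasEulerLogDeriv F Q) (hG : HasEulerLogDeriv G Q) (hG0 : constantCoeff G ≠ 0)
    (h0 : constantCoeff F = constantCoeff G) : F = G := by
  have hGinv : G * G⁻¹ = 1 := PowerSeries.mul_inv_cancel G hG0
  have hderiv : d⁄dX K (F * G⁻¹) = 0 := by
    apply X_mul_cancel
    rw [mul_zero, Derivation.leibniz, derivative_inv', smul_eq_mul, smul_eq_mul]
    unfold HasEulerLogDeriv at hF hG
    linear_combination (G⁻¹) * hF - F * G⁻¹ ^ 2 * hG - F * Q * G⁻¹ * hGinv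
  have hquot : F * G⁻¹ = 1 := derivative.ext (by rw [hderiv, derivative_one])
    (by rw [map_mul, constantCoeff_inv, h0, map_one, mul_inv_cancel₀ hG0])
  calc F = F * G⁻¹ * G := by rw [mul_assoc, mul_comm G⁻¹, hGinv, mul_one]
    _ = G := by rw [hquot, one_mul]

end PowerSeries

theorem Multiset.prod_factorial_count_cons (a : ℕ) (s : Multiset ℕ) :
    ∏ i ∈ (a ::ₘ s).toFinset, ((a ::ₘ s).count i).factorial
      = (s.count a + 1) * ∏ i ∈ s.toFinset, (s.count i).factorial := by
  classical
  have ha : a ∈ (a ::ₘ s).toFinset := by simp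
  have hsub : s.toFinset ⊆ (a ::ₘ s).toFinset := fun i hi => by simp_all
  rw [Finset.prod_subset hsub fun i _ hi => by
      rw [Multiset.count_eq_zero.mpr (by simpa using hi), Nat.factorial_zero],
    ← Finset.mul_prod_erase _ _ ha, ← Finset.mul_prod_erase _ (fun i => (s.count i).factorial) ha,
    Finset.prod_congr rfl fun i hi => by rw [Multiset.count_cons_of_ne (Finset.ne_of_mem_erase hi)],
    Multiset.count_cons_self, Nat.factorial_succ, mul_assoc]

theorem zOf_partitionWithPartEquiv_symm {N a : ℕ} (ha1 : 1 ≤ a) (ha : a ≤ N)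
    (Q : (N - a).Partition) :
    zOf ((Nat.Partition.partitionWithPartEquiv ha1 ha).symm Q).1
      = a * (Q.parts.count a + 1) * zOf Q := by
  simp only [zOf, Nat.Partition.partitionWithPartEquiv_symm_apply_parts, Multiset.prod_cons]
  rw [← Nat.cast_prod, ← Nat.cast_prod, Multiset.prod_factorial_count_cons]
  push_cast
  ring

theorem pProd_eq_prod_map {N : ℕ} (P : N.Partition) :
    pProd P = (P.parts.map fun i => X i.toPNat').prod := by
  rw [pProd, ← Multiset.attach_map_val' P.parts fun i => (X i.toPNat' : SymF)]
  congr 2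
  funext ⟨i, hi⟩
  exact congrArg X (PNat.eq (PNat.toPNat'_coe (P.parts_pos hi)).symm)

theorem zOf_ne_zero {N : ℕ} (P : N.Partition) : zOf P ≠ 0 :=
  mul_ne_zero (Nat.cast_ne_zero.mpr (Multiset.prod_ne_zero fun h => (P.parts_pos h).false))
    (Finset.prod_ne_zero_iff.mpr fun _ _ => Nat.cast_ne_zero.mpr (Nat.factorial_ne_zero _))

theorem sum_count_smul_filter_mem_parts {N a : ℕ} (ha1 : 1 ≤ a) (ha : a ≤ N) :
    ∑ P ∈ (univ : Finset N.Partition).filter (a ∈ ·.parts),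
        ((P.parts.count a * a : ℕ) : ℚ) • (zOf P)⁻¹ • pProd P
      = X a.toPNat' * hSym (N - a) := by
  rw [Finset.sum_subtype _ (p := (a ∈ ·.parts)) (fun P => by simp),
    ← (Nat.Partition.partitionWithPartEquiv ha1 ha).symm.sum_comp, hSym, Finset.mul_sum]
  refine Finset.sum_congr rfl fun Q _ => ?_
  have hz := zOf_ne_zero Q
  rw [zOf_partitionWithPartEquiv_symm, pProd_eq_prod_map, pProd_eq_prod_map,
    Nat.Partition.partitionWithPartEquiv_symm_apply_parts, Multiset.count_cons_self,
    Multiset.map_cons, Multiset.prod_cons, smul_smul, mul_smul_comm]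
  congr 2
  push_cast
  field_simp

theorem newton_hSym (n : ℕ) :
    ((n + 1 : ℕ) : SymF) * hSym (n + 1)
      = ∑ j ∈ range (n + 1), X j.succPNat * hSym (n - j) := by
  have hweight (P : (n + 1).Partition) :
      ((n + 1 : ℕ) : ℚ) = ∑ a ∈ P.parts.toFinset, ((P.parts.count a * a : ℕ) : ℚ) := by
    have h := Finset.sum_multiset_count P.parts
    rw [P.parts_sum] at h
    rw [← Nat.cast_sum, Nat.cast_inj]
    simpa only [smul_eq_mul] using h
  calc ((n + 1 : ℕ) : SymF) * hSym (n + 1)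
      = ∑ P : (n + 1).Partition, ∑ a ∈ P.parts.toFinset,
          ((P.parts.count a * a : ℕ) : ℚ) • (zOf P)⁻¹ • pProd P := by
        rw [hSym, Finset.mul_sum]
        refine Finset.sum_congr rfl fun P _ => ?_
        rw [← Finset.sum_smul, ← hweight, Nat.cast_smul_eq_nsmul, nsmul_eq_mul]
    _ = ∑ a ∈ (range (n + 1)).map (addRightEmbedding 1),
          ∑ P ∈ (univ : Finset (n + 1).Partition).filter (a ∈ ·.parts),
            ((P.parts.count a * a : ℕ) : ℚ) • (zOf P)⁻¹ • pProd P := by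
        refine Finset.sum_comm' fun P a => ?_
        simp only [mem_univ, true_and, Multiset.mem_toFinset, mem_filter, mem_map, mem_range,
          addRightEmbedding_apply]
        refine ⟨fun ha => ⟨ha, a - 1, ?_⟩, And.left⟩
        have := P.parts_pos ha
        have := Nat.Partition.le_of_mem_parts ha
        omega
    _ = ∑ j ∈ range (n + 1), X j.succPNat * hSym (n - j) := by
        rw [Finset.sum_map]
        refine Finset.sum_congr rfl fun j hj => ?_
        rw [addRightEmbedding_apply, sum_count_smul_filter_mem_parts (by omega)
          (by simp at hj; omega), Nat.add_sub_add_right]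
        rfl

theorem hasEulerLogDeriv_mk_hSym :
    PowerSeries.HasEulerLogDeriv (PowerSeries.mk hSym)
      (PowerSeries.X * PowerSeries.mk fun j => X j.succPNat) := by
  refine PowerSeries.ext fun N => ?_
  rcases N with _ | n
  · simp
  · rw [PowerSeries.coeff_succ_X_mul, PowerSeries.coeff_derivative, mul_left_comm,
      PowerSeries.coeff_succ_X_mul, mul_comm (PowerSeries.mk hSym), PowerSeries.coeff_mul,
      Finset.Nat.sum_antidiagonal_eq_sum_range_succ
        (fun j i => PowerSeries.coeff j (PowerSeries.mk fun j => X j.succPNat) *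
          PowerSeries.coeff i (PowerSeries.mk hSym)),
      PowerSeries.coeff_mk, mul_comm, ← Nat.cast_succ, newton_hSym]
    simp only [PowerSeries.coeff_mk]

theorem hSym_zero : hSym 0 = 1 := by
  simp [hSym, zOf, pProd_eq_prod_map]

noncomputable def superSpecialization {n m : ℕ} (x : Fin n → ℂ) (y : Fin m → ℂ) : SymF →ₐ[ℚ] ℂ :=
  aeval fun k : ℕ+ => (∑ i, x i ^ (k : ℕ)) + (-1 : ℂ) ^ ((k : ℕ) - 1) * ∑ j, y j ^ (k : ℕ)

theorem map_mk_hSym_mul_prod {n m : ℕ} (x : Fin n → ℂ) (y : Fin m → ℂ) :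
    PowerSeries.map (superSpecialization x y : SymF →+* ℂ) (PowerSeries.mk hSym)
        * ∏ i, (1 + PowerSeries.C (-x i) * PowerSeries.X)
      = ∏ j, (1 + PowerSeries.C (y j) * PowerSeries.X) := by
  have hE := PowerSeries.HasEulerLogDeriv.prod univ fun i _ =>
    PowerSeries.hasEulerLogDeriv_one_add_C_mul_X (-x i)
  have hY := PowerSeries.HasEulerLogDeriv.prod univ fun j _ =>
    PowerSeries.hasEulerLogDeriv_one_add_C_mul_X (y j)
  have hQ : PowerSeries.map (superSpecialization x y : SymF →+* ℂ)
        (PowerSeries.X * PowerSeries.mk fun j => X j.succPNat)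
      + ∑ i, PowerSeries.X * PowerSeries.mk (fun k => -x i * (- -x i) ^ k)
      = ∑ j, PowerSeries.X * PowerSeries.mk fun k => y j * (-y j) ^ k := by
    rw [map_mul, PowerSeries.map_X, ← Finset.mul_sum, ← Finset.mul_sum, ← mul_add]
    congr 1
    refine PowerSeries.ext fun k => ?_
    simp only [map_add, map_sum, PowerSeries.coeff_map, PowerSeries.coeff_mk, superSpecialization,
      AlgHom.coe_toRingHom, aeval_X, Nat.succPNat_coe, Nat.succ_eq_add_one, Nat.add_sub_cancel,
      neg_neg]
    have hx : ∑ i, x i ^ (k + 1) + ∑ i, -x i * x i ^ k = 0 := by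
      rw [← Finset.sum_add_distrib]
      exact Finset.sum_eq_zero fun i _ => by ring
    have hy : (-1) ^ k * ∑ j, y j ^ (k + 1) = ∑ j, y j * (-y j) ^ k := by
      rw [Finset.mul_sum]
      exact Finset.sum_congr rfl fun j _ => by rw [neg_pow]; ring
    linear_combination hx + hy
  refine (hQ ▸ (hasEulerLogDeriv_mk_hSym.map _).mul hE).eq hY ?_ ?_
  · simp [map_prod]
  · rw [map_mul, ← PowerSeries.coeff_zero_eq_constantCoeff_apply, PowerSeries.coeff_map,
      PowerSeries.coeff_mk, hSym_zero, map_one, one_mul]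
    simp [map_prod]

theorem superSpecialization_hZ_recurrence {n m : ℕ} (x : Fin n → ℂ) (y : Fin m → ℂ) {M : ℤ}
    (hM : (m : ℤ) < M) :
    ∑ r ∈ range (n + 1), PowerSeries.coeff r (∏ i, (1 + PowerSeries.C (-x i) * PowerSeries.X))
      * superSpecialization x y (hZ (M - r)) = 0 := by
  lift M to ℕ using by omega
  rw [← PowerSeries.coeff_mul_eq_sum_range (f := fun k => superSpecialization x y (hZ k))
      (F := PowerSeries.map (superSpecialization x y : SymF →+* ℂ) (PowerSeries.mk hSym)), mul_comm,
    map_mk_hSym_mul_prod, PowerSeries.coeff_prod_one_add_C_mul_X_eq_zero _ _ (by simpa using hM)]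
  · intro r hr
    exact PowerSeries.coeff_prod_one_add_C_mul_X_eq_zero _ _ (by simpa using hr)
  · intro k
    simp [hZ]
  · intro k hk
    simp [hZ, hk.not_ge]

theorem mem_span_of_linearRecurrence {R V : Type*} [Ring R] [AddCommGroup V] [Module R V]
    {v : ℤ → V} {c : ℕ → R} {n : ℕ} {m : ℤ} (hc : c 0 = 1)
    (hrec : ∀ M, m < M → ∑ r ∈ range (n + 1), c r • v (M - r) = 0) {K : ℤ} (hK : m - n < K) :
    v K ∈ Submodule.span R (Set.range fun r : Fin n => v (m - r)) := by
  set S := Submodule.span R (Set.range fun r : Fin n => v (m - r))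
  suffices h : ∀ L, m ≤ L → ∀ K, m - n < K → K ≤ L → v K ∈ S from
    h (max m K) (le_max_left _ _) K hK (le_max_right _ _)
  intro L hL
  induction L, hL using Int.leInduction with
  | base =>
    intro K hKn hKm
    exact Submodule.subset_span ⟨⟨(m - K).toNat, by omega⟩, congrArg v (by simp; omega)⟩
  | succ L hL ih =>
    intro K hKn hKL
    rcases (Int.le_add_one_iff.mp hKL) with hKL | rfl
    · exact ih K hKn hKL
    · have h := hrec (L + 1) (by omega)
      rw [Finset.sum_range_succ', hc, one_smul, Nat.cast_zero, sub_zero,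
        add_eq_zero_iff_neg_eq] at h
      rw [← h]
      refine S.neg_mem (S.sum_mem fun r hr => S.smul_mem _ (ih _ ?_ ?_))
      all_goals simp at hr; push_cast; omega

theorem Matrix.det_eq_zero_of_rows_mem_of_finrank_lt {ι κ K : Type*} [Fintype κ]
    [DecidableEq κ] [Fintype ι] [Field K] {A : Matrix κ κ K} {S : Submodule K (κ → K)}
    {e : ι → κ} (he : Function.Injective e) (hrows : ∀ i, A (e i) ∈ S)
    (hcard : Module.finrank K S < Fintype.card ι) : A.det = 0 := by
  by_contra hdet
  have hli : LinearIndependent K fun i => (⟨A (e i), hrows i⟩ : S) :=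
    .of_comp S.subtype ((Matrix.linearIndependent_rows_of_det_ne_zero hdet).comp e he)
  exact hcard.not_ge hli.fintype_card_le_finrank

theorem lt_plen_of_ne_zero {lam : ℕ → ℕ} (hlam : ∃ N, ∀ i, N ≤ i → lam i = 0) {j : ℕ}
    (hj : lam j ≠ 0) : j < plen lam := by
  by_contra! h
  exact hj (Nat.sInf_mem hlam j h)

/-- If `X` has `n` variables, `Y` has `m` variables, and the partition `λ`
contains the box `(m+1, n+1)` (i.e. `λ_{n+1} ≥ m+1`), then `LS_λ(X;Y) = 0`. -/
theorem littlewood_schur_vanishes (n m : ℕ) (x : Fin n → ℂ) (y : Fin m → ℂ)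
    (lam : ℕ → ℕ) (hlam : IsPartitionFun lam) (hbox : m + 1 ≤ lam n) :
    LSC lam x y = 0 := by
  obtain ⟨hanti, hfin⟩ := hlam
  have hlen : n < plen lam := lt_plen_of_ne_zero hfin (by omega)
  set h : ℤ → ℂ := fun M => superSpecialization x y (hZ M)
  set E := ∏ i, (1 + PowerSeries.C (-x i) * PowerSeries.X)
  have hE0 : PowerSeries.coeff 0 E = 1 := by simp [E, map_prod]
  have hrec (M : ℤ) (hM : (m : ℤ) < M) :
      ∑ r ∈ range (n + 1), PowerSeries.coeff r E • (fun j : Fin (plen lam) => h (M - r + j))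
        = 0 := by
    funext j
    rw [Finset.sum_apply, Pi.zero_apply,
      ← superSpecialization_hZ_recurrence x y (M := M + j) (by omega)]
    refine Finset.sum_congr rfl fun r _ => ?_
    simp only [Pi.smul_apply, smul_eq_mul, h, E, sub_add_eq_add_sub]
  have hrows (i : Fin (n + 1)) : (fun j : Fin (plen lam) => h (lam i - i + j)) ∈
      Submodule.span ℂ (Set.range fun r : Fin n => fun j : Fin (plen lam) => h (m - r + j)) :=
    mem_span_of_linearRecurrence (v := fun K (j : Fin (plen lam)) => h (K + j)) (n := n) (m := m)
      hE0 hrec (K := lam i - i) (by have := hanti (Nat.le_of_lt_succ i.2); omega)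
  have hLSC : LSC lam x y = (Matrix.of fun i j : Fin (plen lam) => h (lam i - i + j)).det :=
    (AlgHom.map_det _ _).trans (congrArg Matrix.det (Matrix.ext fun _ _ => rfl))
  rw [hLSC]
  refine Matrix.det_eq_zero_of_rows_mem_of_finrank_lt (e := Fin.castLE hlen)
    (Fin.castLE_injective _) hrows ?_
  calc _ ≤ n := (finrank_range_le_card _).trans_eq (Fintype.card_fin n)
    _ < _ := by simp
end

section
/- Let X and Y be sets of n and m variables respectively and let l ≥ 0 be an integer. Then LS_{⟨(m+l)^n⟩}(−X; Y) = (∏_{x∈X}(−x))^l · ∏_{x∈X, y∈Y} (y − x). -/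
open MvPolynomial

/-!
Under the specialization `p_k ↦ p_k(U) + (-1)^(k-1) p_k(Y)` (with `U = -X`) the complete
symmetric functions have generating function `∑ h_r t^r = ∏_j (1 + y_j t) / ∏_i (1 - u_i t)`:
written in power sums, `h_r` is the cycle index of `S_r`, whose generating function
`exp (∑ d_k t^k / k)` turns sums of the `d_k` into products.

For distinct nonzero `u_i`, partial fractions give `h_r = ∑_p c_p u_p^r` for every integer
`r > m - n`, including the negative ones where `h_r = 0`. All entries `h_{m+l-i+j}` of the
Jacobi–Trudi matrix of the rectangle are in this range, so the matrix factors as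
`V(u⁻¹)ᵀ · diag (c_p u_p^(m+l+n)) · V(u)` with Vandermonde matrices, and the determinant collapses
to `∏_p u_p^l ∏_j (u_p + y_j)`. Both sides are polynomials in `u` and `y`, so the identity holds
for all `u`.
-/

open Finset

namespace PowerSeries

theorem eq_zero_of_derivative_eq_mul {R : Type*} [CommRing R] [IsAddTorsionFree R] {D H : R⟦X⟧}
    (hH : d⁄dX R H = D * H) (h0 : constantCoeff H = 0) : H = 0 := by
  ext N
  induction N using Nat.strong_induction_on with
  | _ N ih =>
    rcases N with _ | N
    · simpa using h0
    have hcoeff := congrArg (coeff N) hH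
    rw [coeff_derivative, coeff_mul, Finset.sum_eq_zero fun p hp => by
      rw [ih p.2 (by linarith [mem_antidiagonal.mp hp]), map_zero, mul_zero]] at hcoeff
    have hsmul : (N + 1) • coeff (N + 1) H = 0 := by
      rw [nsmul_eq_mul, mul_comm]
      exact_mod_cast hcoeff
    rw [map_zero]
    exact nsmul_right_injective N.succ_ne_zero (hsmul.trans (nsmul_zero _).symm)

theorem eq_of_derivative_eq_mul {R : Type*} [CommRing R] [IsAddTorsionFree R] {D F G : R⟦X⟧}
    (hF : d⁄dX R F = D * F) (hG : d⁄dX R G = D * G) (h0 : constantCoeff F = constantCoeff G) :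
    F = G :=
  sub_eq_zero.mp <| eq_zero_of_derivative_eq_mul (D := D) (by rw [map_sub, hF, hG, mul_sub])
    (by rw [map_sub, h0, sub_self])

theorem one_sub_C_mul_X_mul_mk_pow {R : Type*} [CommRing R] (a : R) :
    (1 - C a * X) * mk (a ^ ·) = 1 := by
  have h := congrArg (rescale a) (mk_one_mul_one_sub_eq_one (S := R))
  rw [map_mul, map_sub, map_one, rescale_X, rescale_mk, mul_comm] at h
  simpa using h

theorem X_sub_C_inv_mul_mk_pow {K : Type*} [Field K] {a : K} (ha : a ≠ 0) :
    (X - C a⁻¹) * mk (a ^ ·) = C (-a⁻¹) := by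
  have hfactor : X - C a⁻¹ = C (-a⁻¹) * (1 - C a * X) := by
    rw [mul_sub, mul_one, ← mul_assoc, ← map_mul, neg_mul, inv_mul_cancel₀ ha]
    simp only [map_neg, map_one]
    ring
  rw [hfactor, mul_assoc, one_sub_C_mul_X_mul_mk_pow, mul_one]

end PowerSeries

namespace Polynomial

open scoped PowerSeries

theorem coe_prod {R ι : Type*} [CommSemiring R] (s : Finset ι) (f : ι → R[X]) :
    ((∏ i ∈ s, f i : R[X]) : R⟦X⟧) = ∏ i ∈ s, (f i : R⟦X⟧) :=
  map_prod coeToPowerSeries.ringHom f s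

theorem natDegree_prod_le_card {R ι : Type*} [CommSemiring R] {s : Finset ι}
    {f : ι → R[X]} (hf : ∀ i ∈ s, (f i).natDegree ≤ 1) : (∏ i ∈ s, f i).natDegree ≤ #s :=
  (natDegree_prod_le _ _).trans <| (sum_le_sum hf).trans (by simp)

end Polynomial

theorem Finset.prod_prod_erase_eq_prod_prod_Ioi {M ι : Type*} [CommMonoid M] [Fintype ι]
    [DecidableEq ι] [LinearOrder ι] [LocallyFiniteOrderTop ι] [LocallyFiniteOrderBot ι]
    (f : ι → ι → M) :
    ∏ p, ∏ q ∈ univ.erase p, f p q = ∏ i, ∏ j ∈ Ioi i, (f j i * f i j) := by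
  have hsplit : ∀ p : ι, univ.erase p = Iio p ∪ Ioi p := fun p => by
    ext q
    simp only [mem_erase, mem_univ, and_true, mem_union, mem_Iio, mem_Ioi]
    exact ne_iff_lt_or_gt
  simp_rw [hsplit, prod_union (Finset.disjoint_left.mpr fun _ h₁ h₂ =>
    lt_asymm (mem_Iio.mp h₁) (mem_Ioi.mp h₂)), prod_mul_distrib]
  congr 1
  exact prod_comm' fun p q => by simp

theorem MvPolynomial.eq_of_eval_eq_of_eval_ne_zero {σ R : Type*} [CommRing R] [IsDomain R]
    [Infinite R] {p q g : MvPolynomial σ R} (hg : g ≠ 0)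
    (h : ∀ v, eval v g ≠ 0 → eval v p = eval v q) : p = q := by
  have hprod : g * (p - q) = 0 := MvPolynomial.funext fun v => by
    by_cases hv : eval v g = 0
    · simp [hv]
    · simp [h v hv]
  exact sub_eq_zero.mp ((mul_eq_zero.mp hprod).resolve_left hg)

section CycleIndex

noncomputable def zMultiset (s : Multiset ℕ) : ℚ :=
  s.prod * ∏ i ∈ s.toFinset, ((s.count i).factorial : ℚ)

theorem zOf_eq_zMultiset {N : ℕ} (P : N.Partition) : zOf P = zMultiset P.parts := by
  simp [zOf, zMultiset]

theorem zMultiset_ne_zero {s : Multiset ℕ} (hs : 0 ∉ s) : zMultiset s ≠ 0 :=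
  mul_ne_zero (by exact_mod_cast Multiset.prod_ne_zero hs)
    (prod_ne_zero_iff.mpr fun _ _ => by exact_mod_cast Nat.factorial_ne_zero _)

theorem zMultiset_cons (k : ℕ) (s : Multiset ℕ) :
    zMultiset (k ::ₘ s) = zMultiset s * k * (s.count k + 1) := by
  have hfact : ∏ i ∈ (k ::ₘ s).toFinset, (((k ::ₘ s).count i).factorial : ℚ)
      = (s.count k + 1) * ∏ i ∈ s.toFinset, ((s.count i).factorial : ℚ) := by
    rw [Multiset.toFinset_cons]
    by_cases hk : k ∈ s.toFinset
    · rw [insert_eq_of_mem hk, ← mul_prod_erase _ _ hk, ← mul_prod_erase _ _ hk,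
        prod_congr rfl fun i hi => by rw [Multiset.count_cons_of_ne (ne_of_mem_erase hi)],
        Multiset.count_cons_self, Nat.factorial_succ]
      push_cast; ring
    · rw [prod_insert hk, Multiset.count_cons_self,
        Multiset.count_eq_zero.mpr (mt Multiset.mem_toFinset.mpr hk),
        prod_congr rfl fun i hi => by
          rw [Multiset.count_cons_of_ne fun h : i = k => hk (h ▸ hi)]]
      simp
  rw [zMultiset, zMultiset, hfact, Multiset.prod_cons]
  push_cast; ring

noncomputable def partitionParts (N : ℕ) : Finset (Multiset ℕ) :=
  (univ : Finset N.Partition).map ⟨Nat.Partition.parts, fun _ _ => Nat.Partition.ext⟩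

theorem mem_partitionParts {N : ℕ} {s : Multiset ℕ} :
    s ∈ partitionParts N ↔ (∀ i ∈ s, 0 < i) ∧ s.sum = N := by
  simp only [partitionParts, mem_map, mem_univ, true_and]
  exact ⟨fun ⟨P, hP⟩ => hP ▸ ⟨fun _ => P.parts_pos, P.parts_sum⟩,
    fun ⟨hpos, hsum⟩ => ⟨⟨s, hpos _, hsum⟩, rfl⟩⟩

theorem sum_filter_mem_partitionParts {M : Type*} [AddCommMonoid M] (f : Multiset ℕ → M)
    {N k : ℕ} (hk : k ∈ Icc 1 N) :
    ∑ s ∈ (partitionParts N).filter (k ∈ ·), f (s.erase k) = ∑ t ∈ partitionParts (N - k), f t := by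
  obtain ⟨hk₀, hkN⟩ := mem_Icc.mp hk
  refine sum_nbij' (·.erase k) (k ::ₘ ·) (fun s hs => ?_) (fun t ht => ?_)
    (fun s hs => Multiset.cons_erase (mem_filter.mp hs).2)
    (fun t _ => Multiset.erase_cons_head k t) (fun _ _ => rfl)
  · obtain ⟨hs, hks⟩ := mem_filter.mp hs
    obtain ⟨hpos, hsum⟩ := mem_partitionParts.mp hs
    have := Multiset.sum_erase hks
    exact mem_partitionParts.mpr ⟨fun i hi => hpos i (Multiset.mem_of_mem_erase hi), by omega⟩
  · obtain ⟨hpos, hsum⟩ := mem_partitionParts.mp ht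
    refine mem_filter.mpr ⟨mem_partitionParts.mpr ⟨fun i hi => ?_, ?_⟩,
      Multiset.mem_cons_self k t⟩
    · rcases Multiset.mem_cons.mp hi with rfl | hi
      exacts [hk₀, hpos i hi]
    · rw [Multiset.sum_cons, hsum]
      omega

variable {K : Type*} [Field K]

noncomputable def cycleWeight (d : ℕ → K) (s : Multiset ℕ) : K :=
  (zMultiset s : K)⁻¹ * (s.map d).prod

theorem cycleWeight_cons [CharZero K] (d : ℕ → K) {k : ℕ} (hk : 0 < k) {s : Multiset ℕ}
    (hs : 0 ∉ s) :
    k * (s.count k + 1) * cycleWeight d (k ::ₘ s) = d k * cycleWeight d s := by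
  have hz : (zMultiset s : K) ≠ 0 := by exact_mod_cast zMultiset_ne_zero hs
  have hk' : (k : K) ≠ 0 := by exact_mod_cast hk.ne'
  have hc : (s.count k : K) + 1 ≠ 0 := by exact_mod_cast Nat.succ_ne_zero (s.count k)
  rw [cycleWeight, cycleWeight, zMultiset_cons, Multiset.map_cons, Multiset.prod_cons]
  push_cast
  field_simp

noncomputable def cycleIndex (d : ℕ → K) (N : ℕ) : K :=
  ∑ P : N.Partition, (zOf P : K)⁻¹ * (P.parts.map d).prod

theorem cycleIndex_eq_sum_partitionParts (d : ℕ → K) (N : ℕ) :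
    cycleIndex d N = ∑ s ∈ partitionParts N, cycleWeight d s := by
  simp only [cycleIndex, partitionParts, cycleWeight, zOf_eq_zMultiset, sum_map]
  rfl

theorem natCast_mul_cycleIndex [CharZero K] (d : ℕ → K) (N : ℕ) :
    N * cycleIndex d N = ∑ k ∈ Icc 1 N, d k * cycleIndex d (N - k) := by
  -- Write `N = ∑ₖ k mₖ(s)` and remove one part `k` from `s`.
  have hsplit : ∀ s ∈ partitionParts N,
      N * cycleWeight d s = ∑ k ∈ s.toFinset, d k * cycleWeight d (s.erase k) := by
    intro s hs
    obtain ⟨hpos, hsum⟩ := mem_partitionParts.mp hs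
    rw [← hsum, sum_multiset_count, Nat.cast_sum, sum_mul]
    refine sum_congr rfl fun k hk => ?_
    obtain ⟨t, rfl⟩ := Multiset.exists_cons_of_mem (Multiset.mem_toFinset.mp hk)
    rw [Multiset.erase_cons_head, ← cycleWeight_cons d (hpos k (Multiset.mem_cons_self k t))
      fun h0 => (hpos 0 (Multiset.mem_cons_of_mem h0)).false, Multiset.count_cons_self,
      smul_eq_mul]
    push_cast
    ring
  rw [cycleIndex_eq_sum_partitionParts, mul_sum, sum_congr rfl hsplit,
    sum_comm' (t' := Icc 1 N) (s' := fun k => (partitionParts N).filter (k ∈ ·))]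
  · refine sum_congr rfl fun k hk => ?_
    rw [cycleIndex_eq_sum_partitionParts, mul_sum,
      sum_filter_mem_partitionParts (fun t => d k * cycleWeight d t) hk]
  · intro s k
    simp only [mem_filter, Multiset.mem_toFinset, mem_Icc]
    refine ⟨fun ⟨hs, hks⟩ => ⟨⟨hs, hks⟩, (mem_partitionParts.mp hs).1 k hks, ?_⟩,
      fun ⟨⟨hs, hks⟩, _⟩ => ⟨hs, hks⟩⟩
    exact (mem_partitionParts.mp hs).2 ▸ Multiset.le_sum_of_mem hks

end CycleIndex

section CycleIndexSeries

open PowerSeries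

variable {K : Type*} [Field K]

/-- `exp (∑ₖ d k Xᵏ / k)`, handled through the differential equation
`F' = (∑ₖ d (k + 1) Xᵏ) F` that characterizes it. -/
noncomputable def cycleIndexSeries (d : ℕ → K) : K⟦X⟧ := mk (cycleIndex d)

theorem constantCoeff_cycleIndexSeries (d : ℕ → K) : constantCoeff (cycleIndexSeries d) = 1 := by
  rw [← coeff_zero_eq_constantCoeff_apply, cycleIndexSeries, coeff_mk, cycleIndex,
    univ_unique, sum_singleton, Nat.Partition.partition_zero_parts]
  simp [zOf]

theorem derivative_cycleIndexSeries [CharZero K] (d : ℕ → K) :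
    d⁄dX K (cycleIndexSeries d) = mk (fun k => d (k + 1)) * cycleIndexSeries d := by
  ext N
  have hIcc : ∀ f : ℕ → K, ∑ k ∈ Icc 1 (N + 1), f k = ∑ k ∈ range (N + 1), f (k + 1) := by
    intro f
    rw [range_eq_Ico, sum_Ico_add' f 0 (N + 1) 1]
    rfl
  have h := natCast_mul_cycleIndex d (N + 1)
  rw [hIcc] at h
  simp only [Nat.add_sub_add_right] at h
  rw [coeff_derivative, PowerSeries.coeff_mul, Nat.sum_antidiagonal_eq_sum_range_succ_mk]
  simp only [cycleIndexSeries, coeff_mk]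
  rw [← h]
  push_cast
  ring

theorem cycleIndexSeries_eq_of_derivative [CharZero K] {d : ℕ → K} {F : K⟦X⟧}
    (h0 : constantCoeff F = 1) (hF : d⁄dX K F = mk (fun k => d (k + 1)) * F) :
    cycleIndexSeries d = F :=
  eq_of_derivative_eq_mul (derivative_cycleIndexSeries d) hF
    ((constantCoeff_cycleIndexSeries d).trans h0.symm)

theorem cycleIndexSeries_add [CharZero K] (d e : ℕ → K) :
    cycleIndexSeries (d + e) = cycleIndexSeries d * cycleIndexSeries e := by
  refine cycleIndexSeries_eq_of_derivative (by simp [constantCoeff_cycleIndexSeries]) ?_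
  have hmk : mk (fun k => (d + e) (k + 1)) = mk (fun k => d (k + 1)) + mk (fun k => e (k + 1)) := by
    ext; simp
  rw [Derivation.leibniz, derivative_cycleIndexSeries, derivative_cycleIndexSeries, hmk,
    smul_eq_mul, smul_eq_mul]
  ring

theorem cycleIndexSeries_zero [CharZero K] : cycleIndexSeries (0 : ℕ → K) = 1 :=
  cycleIndexSeries_eq_of_derivative (map_one _) (by ext; simp)

theorem cycleIndexSeries_sum [CharZero K] {ι : Type*} (s : Finset ι) (d : ι → ℕ → K) :
    cycleIndexSeries (∑ i ∈ s, d i) = ∏ i ∈ s, cycleIndexSeries (d i) := by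
  induction s using Finset.cons_induction with
  | empty => exact cycleIndexSeries_zero
  | cons a s ha ih => rw [sum_cons, prod_cons, cycleIndexSeries_add, ih]

theorem cycleIndexSeries_pow [CharZero K] (a : K) : cycleIndexSeries (a ^ ·) = mk (a ^ ·) := by
  refine cycleIndexSeries_eq_of_derivative (by simp [← coeff_zero_eq_constantCoeff_apply]) ?_
  ext N
  rw [coeff_derivative, PowerSeries.coeff_mul, sum_congr rfl fun p hp => by
    rw [coeff_mk, coeff_mk, ← pow_add, add_right_comm, mem_antidiagonal.mp hp]]
  simp [Nat.card_antidiagonal]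
  ring

end CycleIndexSeries

section Specialization

open PowerSeries
open scoped Polynomial

variable {K : Type*} [Field K] [CharZero K]

theorem aeval_pProd {c : ℕ+ → K} {d : ℕ → K} (h : ∀ k : ℕ+, d k = c k) {N : ℕ}
    (P : N.Partition) : aeval c (pProd P) = (P.parts.map d).prod := by
  rw [pProd, map_multiset_prod, Multiset.map_map, ← Multiset.attach_map_val' P.parts d]
  congr 1
  exact Multiset.map_congr rfl fun i _ => (aeval_X c _).trans (h _).symm

theorem aeval_hSym {c : ℕ+ → K} {d : ℕ → K} (h : ∀ k : ℕ+, d k = c k) (N : ℕ) :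
    aeval c (hSym N) = cycleIndex d N := by
  rw [hSym, map_sum, cycleIndex]
  refine sum_congr rfl fun P _ => ?_
  rw [MvPolynomial.smul_eq_C_mul, map_mul, aeval_C, aeval_pProd h, map_inv₀, eq_ratCast]

-- `LSC lam u y = aeval (lsSpec u y) (schurF lam)` holds by definition.
def lsSpec {R : Type*} [CommRing R] {a b : ℕ} (u : Fin a → R) (y : Fin b → R) : ℕ+ → R :=
  fun k => (∑ i, u i ^ (k : ℕ)) + (-1 : R) ^ ((k : ℕ) - 1) * ∑ j, y j ^ (k : ℕ)

theorem aeval_lsSpec_hSym {a b : ℕ} (u : Fin a → K) (y : Fin b → K) (N : ℕ) :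
    aeval (lsSpec u y) (hSym N)
      = coeff N ((∏ j, (1 + PowerSeries.C (y j) * PowerSeries.X)) * ∏ i, mk (u i ^ ·)) := by
  set d₁ : ℕ → K := ∑ i, (u i ^ ·)
  set d₂ : ℕ → K := ∑ j, ((-y j) ^ ·)
  have hspec : ∀ k : ℕ+, (d₁ - d₂) k = lsSpec u y k := by
    rintro ⟨_ | k, hk⟩
    · exact absurd hk (lt_irrefl 0)
    have hsign : ∀ z : K, (-1) ^ k * z ^ (k + 1) = -(-z) ^ (k + 1) := fun z => by ring
    simp only [d₁, d₂, lsSpec, Pi.sub_apply, Finset.sum_apply, PNat.mk_coe, Nat.add_sub_cancel,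
      mul_sum, hsign, sum_neg_distrib, sub_eq_add_neg]
  have hinv : (∏ j, (1 + PowerSeries.C (y j) * PowerSeries.X)) * cycleIndexSeries d₂ = 1 := by
    rw [cycleIndexSeries_sum, ← prod_mul_distrib]
    refine prod_eq_one fun j _ => ?_
    have h := one_sub_C_mul_X_mul_mk_pow (-y j)
    rwa [map_neg, neg_mul, sub_neg_eq_add, ← cycleIndexSeries_pow] at h
  have hd₁ : cycleIndexSeries d₁ = ∏ i, mk (u i ^ ·) := by
    rw [cycleIndexSeries_sum]
    exact prod_congr rfl fun i _ => cycleIndexSeries_pow (u i)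
  have hsplit : cycleIndexSeries (d₁ - d₂) * cycleIndexSeries d₂ = cycleIndexSeries d₁ := by
    rw [← cycleIndexSeries_add, sub_add_cancel]
  rw [aeval_hSym hspec, ← hd₁, ← hsplit, mul_left_comm, hinv, mul_one, cycleIndexSeries, coeff_mk]

-- The factor `X ^ s` turns `hZ r = 0` for `-s ≤ r < 0` into vanishing coefficients.
theorem aeval_lsSpec_hZ {n m : ℕ} (u : Fin n → K) (y : Fin m → K) (s : ℕ) {r : ℤ}
    (hr : -(s : ℤ) ≤ r) :
    aeval (lsSpec u y) (hZ r) = PowerSeries.coeff (r + s).toNat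
      (((Polynomial.X ^ s * ∏ j, (1 + Polynomial.C (y j) * Polynomial.X) : K[X]) : K⟦X⟧)
        * ∏ i, mk (u i ^ ·)) := by
  rw [Polynomial.coe_mul, Polynomial.coe_pow, Polynomial.coe_X, Polynomial.coe_prod, mul_assoc,
    coeff_X_pow_mul', hZ]
  simp only [Polynomial.coe_add, Polynomial.coe_one, Polynomial.coe_mul, Polynomial.coe_C,
    Polynomial.coe_X]
  split_ifs with hr₀ hs
  · rw [aeval_lsSpec_hSym, show (r + s).toNat - s = r.toNat by omega]
  · omega
  · omega
  · exact map_zero _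

end Specialization

section PartialFractions

open PowerSeries
open scoped Polynomial

variable {K : Type*} [Field K] {ι : Type*} [Fintype ι] [DecidableEq ι]

/-- The coefficient of `1 / (1 - u p * t)` in the partial fraction expansion of
`B t / ∏ q, (1 - u q * t)`. -/
noncomputable def partialFractionCoeff (u : ι → K) (B : K[X]) (p : ι) : K :=
  B.eval (u p)⁻¹ / ∏ q ∈ univ.erase p, (1 - u q / u p)

theorem prod_one_sub_div_ne_zero {u : ι → K} (hu : ∀ p, u p ≠ 0) (hinj : Function.Injective u)
    (p : ι) : ∏ q ∈ univ.erase p, (1 - u q / u p) ≠ 0 :=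
  prod_ne_zero_iff.mpr fun _ hq => sub_ne_zero.mpr fun h =>
    ne_of_mem_erase hq (hinj ((div_eq_one_iff_eq (hu p)).mp h.symm))

theorem modByMonic_nodal_eq_sum_partialFractionCoeff {u : ι → K} (hu : ∀ p, u p ≠ 0)
    (hinj : Function.Injective u) (B : K[X]) :
    B %ₘ Lagrange.nodal univ u⁻¹ = ∑ p, Polynomial.C (partialFractionCoeff u B p)
      * ∏ q ∈ univ.erase p, (1 - Polynomial.C (u q) * Polynomial.X) := by
  have hnodes : Set.InjOn u⁻¹ (univ : Finset ι) := fun p _ q _ h => hinj (inv_injective h)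
  refine Polynomial.eq_of_degrees_lt_of_eval_index_eq _ hnodes ?_ ?_ fun q _ => ?_
  · rw [← Lagrange.degree_nodal (s := univ) (v := u⁻¹)]
    exact Polynomial.degree_modByMonic_lt _ Lagrange.nodal_monic
  · refine (Polynomial.degree_sum_le _ _).trans_lt
      ((Finset.sup_lt_iff (WithBot.bot_lt_coe _)).mpr fun p _ => ?_)
    refine (Polynomial.degree_le_of_natDegree_le ((Polynomial.natDegree_C_mul_le _ _).trans
      (Polynomial.natDegree_prod_le_card fun q _ => by compute_degree))).trans_lt ?_
    rw [card_erase_of_mem (mem_univ p)]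
    exact_mod_cast Nat.sub_lt (card_pos.mpr ⟨p, mem_univ p⟩) one_pos
  · rw [Polynomial.modByMonic_eq_sub_mul_div, Polynomial.eval_sub, Polynomial.eval_mul,
      Lagrange.eval_nodal_at_node (mem_univ q), zero_mul, sub_zero, Polynomial.eval_finsetSum,
      sum_eq_single q (fun p _ hpq => ?_) (by simp)]
    · simp only [Polynomial.eval_mul, Polynomial.eval_C, Polynomial.eval_prod, Polynomial.eval_sub,
        Polynomial.eval_one, Polynomial.eval_X, Pi.inv_apply, ← div_eq_mul_inv,
        partialFractionCoeff, div_mul_cancel₀ _ (prod_one_sub_div_ne_zero hu hinj q)]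
    · rw [Polynomial.eval_mul, Polynomial.eval_prod,
        prod_eq_zero (mem_erase.mpr ⟨hpq.symm, mem_univ q⟩) (by simp [hu q]), mul_zero]

theorem coeff_mul_prod_mk_pow {u : ι → K} (hu : ∀ p, u p ≠ 0) (hinj : Function.Injective u)
    (B : K[X]) {N : ℕ} (hN : B.natDegree < N + Fintype.card ι) :
    coeff N ((B : K⟦X⟧) * ∏ p, mk (u p ^ ·)) = ∑ p, partialFractionCoeff u B p * u p ^ N := by
  have hnodal : (Lagrange.nodal univ u⁻¹ : K⟦X⟧) * ∏ p, mk (u p ^ ·)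
      = PowerSeries.C (∏ p, -(u p)⁻¹) := by
    rw [Lagrange.nodal, Polynomial.coe_prod, ← prod_mul_distrib, map_prod]
    refine prod_congr rfl fun p _ => ?_
    simpa using X_sub_C_inv_mul_mk_pow (hu p)
  have hfrac : ∀ p, ((∏ q ∈ univ.erase p, (1 - Polynomial.C (u q) * Polynomial.X) : K[X]) : K⟦X⟧)
      * ∏ p, mk (u p ^ ·) = mk (u p ^ ·) := by
    intro p
    rw [Polynomial.coe_prod, ← mul_prod_erase univ _ (mem_univ p), mul_left_comm,
      ← prod_mul_distrib, prod_eq_one fun q _ => ?_, mul_one]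
    push_cast
    exact one_sub_C_mul_X_mul_mk_pow (u q)
  have hquot : (B /ₘ Lagrange.nodal univ u⁻¹).coeff N = 0 := by
    rcases eq_or_ne (B /ₘ Lagrange.nodal univ u⁻¹) 0 with h | h
    · rw [h, Polynomial.coeff_zero]
    have hdeg := (Polynomial.divByMonic_eq_zero_iff Lagrange.nodal_monic).not.mp h
    rw [Lagrange.degree_nodal, card_univ, not_lt,
      Polynomial.degree_eq_natDegree (fun h0 => h (by simp [h0]))] at hdeg
    apply Polynomial.coeff_eq_zero_of_natDegree_lt
    rw [Polynomial.natDegree_divByMonic _ Lagrange.nodal_monic, Lagrange.natDegree_nodal, card_univ]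
    have : Fintype.card ι ≤ B.natDegree := by exact_mod_cast hdeg
    omega
  conv_lhs => rw [← Polynomial.modByMonic_add_div B (Lagrange.nodal univ u⁻¹)]
  rw [modByMonic_nodal_eq_sum_partialFractionCoeff hu hinj, Polynomial.coe_add, Polynomial.coe_mul,
    add_mul, mul_right_comm, hnodal, map_add, PowerSeries.coeff_C_mul, Polynomial.coeff_coe, hquot,
    mul_zero, add_zero, ← Polynomial.coeToPowerSeries.ringHom_apply, map_sum, sum_mul, map_sum]
  refine sum_congr rfl fun p _ => ?_
  rw [Polynomial.coeToPowerSeries.ringHom_apply, Polynomial.coe_mul, Polynomial.coe_C, mul_assoc,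
    hfrac, PowerSeries.coeff_C_mul, coeff_mk]

end PartialFractions

section Vandermonde

variable {K : Type*} [Field K]

theorem det_vandermonde_inv_mul_det_vandermonde {n : ℕ} {u : Fin n → K} (hu : ∀ p, u p ≠ 0) :
    (Matrix.vandermonde u⁻¹).det * (Matrix.vandermonde u).det
      = ∏ p, ∏ q ∈ univ.erase p, (1 - u q / u p) := by
  rw [Matrix.det_vandermonde, Matrix.det_vandermonde, ← prod_mul_distrib,
    prod_prod_erase_eq_prod_prod_Ioi]
  refine prod_congr rfl fun i _ => ?_
  rw [← prod_mul_distrib]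
  refine prod_congr rfl fun j _ => ?_
  have := hu i
  have := hu j
  simp only [Pi.inv_apply]
  field_simp

theorem det_of_sum_mul_pow {n : ℕ} (c : Fin n → K) {u : Fin n → K} (hu : ∀ p, u p ≠ 0) {k : ℕ}
    (hk : n ≤ k + 1) :
    (Matrix.of fun i j : Fin n => ∑ p, c p * u p ^ (k - i + j)).det
      = (∏ p, c p * u p ^ k) * ((Matrix.vandermonde u⁻¹).det * (Matrix.vandermonde u).det) := by
  have hfactor : (Matrix.of fun i j : Fin n => ∑ p, c p * u p ^ (k - i + j))
      = (Matrix.vandermonde u⁻¹).transpose * Matrix.diagonal (fun p => c p * u p ^ k)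
        * Matrix.vandermonde u := by
    ext i j
    rw [Matrix.mul_apply]
    simp only [Matrix.of_apply, Matrix.mul_diagonal, Matrix.transpose_apply,
      Matrix.vandermonde_apply, Pi.inv_apply]
    refine sum_congr rfl fun p _ => ?_
    rw [pow_add, pow_sub₀ _ (hu p) (by omega), inv_pow]
    ring
  rw [hfactor, Matrix.det_mul, Matrix.det_mul, Matrix.det_transpose, Matrix.det_diagonal]
  ring

end Vandermonde

section Rectangle

def rectangle (n a : ℕ) : ℕ → ℕ := fun i => if i < n then a else 0

theorem plen_rectangle (n : ℕ) {a : ℕ} (ha : a ≠ 0) : plen (rectangle n a) = n := by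
  have hmem : n ∈ {N | ∀ i, N ≤ i → rectangle n a i = 0} := fun i hi => if_neg (by omega)
  refine le_antisymm (Nat.sInf_le hmem) (le_csInf ⟨n, hmem⟩ fun N hN => ?_)
  by_contra! h
  have := hN (n - 1) (by omega)
  simp [rectangle, show n - 1 < n by omega, ha] at this

theorem schurF_rectangle_zero (n : ℕ) : schurF (rectangle n 0) = 1 := by
  have hlen : plen (rectangle n 0) = 0 :=
    Nat.sInf_eq_zero.mpr (Or.inl fun i _ => by simp [rectangle])
  rw [schurF, hlen, schurSym, Matrix.det_isEmpty]

open scoped Polynomial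

variable {K : Type*} [Field K] [CharZero K]

theorem aeval_lsSpec_hZ_eq_sum {n m : ℕ} {u : Fin n → K} (hu : ∀ p, u p ≠ 0)
    (hinj : Function.Injective u) (y : Fin m → K) {r : ℤ} (hr : (m : ℤ) < r + n) :
    aeval (lsSpec u y) (hZ r) = ∑ p, partialFractionCoeff u
      (Polynomial.X ^ n * ∏ j, (1 + Polynomial.C (y j) * Polynomial.X)) p
        * u p ^ (r + n).toNat := by
  rw [aeval_lsSpec_hZ u y n (by omega), coeff_mul_prod_mk_pow hu hinj]
  have hB : (∏ j, (1 + Polynomial.C (y j) * Polynomial.X)).natDegree ≤ m :=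
    (Polynomial.natDegree_prod_le_card fun j _ => by compute_degree).trans (by simp)
  have := (Polynomial.natDegree_mul_le (p := Polynomial.X ^ n)).trans
    (add_le_add (Polynomial.natDegree_X_pow_le n) hB)
  rw [Fintype.card_fin]
  omega

theorem eval_inv_mul_pow_eq_pow_mul_prod_add {n m : ℕ} (l : ℕ) {a : K} (ha : a ≠ 0)
    (y : Fin m → K) :
    (Polynomial.X ^ n * ∏ j, (1 + Polynomial.C (y j) * Polynomial.X)).eval a⁻¹ * a ^ (m + l + n)
      = a ^ l * ∏ j, (a + y j) := by
  simp only [Polynomial.eval_mul, Polynomial.eval_pow, Polynomial.eval_X, Polynomial.eval_prod,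
    Polynomial.eval_add, Polynomial.eval_one, Polynomial.eval_C]
  have hinv : a⁻¹ ^ n * a ^ n = 1 := by rw [← mul_pow, inv_mul_cancel₀ ha, one_pow]
  have hprod : (∏ j, (1 + y j * a⁻¹)) * a ^ m = ∏ j, (a + y j) := by
    have h := prod_mul_pow_card (s := (univ : Finset (Fin m))) (f := fun j => 1 + y j * a⁻¹)
      (b := a)
    rw [Finset.card_fin] at h
    rw [h]
    exact prod_congr rfl fun j _ => by field_simp
  linear_combination (a ^ l * (∏ j, (1 + y j * a⁻¹)) * a ^ m) * hinv + a ^ l * hprod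

theorem aeval_lsSpec_schurF_rectangle_of_injective {n m : ℕ} (l : ℕ) {u : Fin n → K}
    (hu : ∀ p, u p ≠ 0) (hinj : Function.Injective u) (y : Fin m → K) :
    aeval (lsSpec u y) (schurF (rectangle n (m + l))) = (∏ i, u i) ^ l * ∏ i, ∏ j, (u i + y j) := by
  rcases eq_or_ne (m + l) 0 with h | h
  · obtain ⟨rfl, rfl⟩ := Nat.add_eq_zero_iff.mp h
    simp [schurF_rectangle_zero]
  set B : K[X] := Polynomial.X ^ n * ∏ j, (1 + Polynomial.C (y j) * Polynomial.X)
  have hentries : (aeval (lsSpec u y)).mapMatrix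
      (Matrix.of fun i j : Fin n => hZ ((rectangle n (m + l) i : ℤ) - (i : ℕ) + (j : ℕ)))
      = Matrix.of fun i j : Fin n =>
          ∑ p, partialFractionCoeff u B p * u p ^ (m + l + n - i + j) := by
    ext i j
    rw [AlgHom.mapMatrix_apply, Matrix.map_apply, Matrix.of_apply, Matrix.of_apply, rectangle,
      if_pos i.is_lt, aeval_lsSpec_hZ_eq_sum hu hinj y (by omega)]
    congr! 3
    omega
  have hfactor : ∀ p, partialFractionCoeff u B p * u p ^ (m + l + n)
      * ∏ q ∈ univ.erase p, (1 - u q / u p) = u p ^ l * ∏ j, (u p + y j) := fun p => by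
    rw [mul_right_comm, partialFractionCoeff,
      div_mul_cancel₀ _ (prod_one_sub_div_ne_zero hu hinj p),
      eval_inv_mul_pow_eq_pow_mul_prod_add l (hu p) y]
  rw [schurF, plen_rectangle n h, schurSym, AlgHom.map_det, hentries,
    det_of_sum_mul_pow _ hu (by omega), det_vandermonde_inv_mul_det_vandermonde hu,
    ← prod_mul_distrib, prod_congr rfl fun p _ => hfactor p, prod_mul_distrib, prod_pow]

theorem eval_aeval_lsSpec {n m : ℕ} (v : Fin n ⊕ Fin m → K) (f : SymF) :
    eval v (aeval (lsSpec (X ∘ Sum.inl) (X ∘ Sum.inr)) f)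
      = aeval (lsSpec (v ∘ Sum.inl) (v ∘ Sum.inr)) f := by
  have h := DFunLike.congr_fun (comp_aeval (R := ℚ) (S₁ := MvPolynomial (Fin n ⊕ Fin m) K)
    (lsSpec (X ∘ Sum.inl) (X ∘ Sum.inr)) ((aeval v).restrictScalars ℚ)) f
  simp only [AlgHom.coe_comp, Function.comp_apply, AlgHom.coe_restrictScalars'] at h
  refine h.trans (congrArg (aeval · f) (funext fun k => ?_))
  simp [lsSpec]

theorem aeval_lsSpec_schurF_rectangle {n m : ℕ} (l : ℕ) (u : Fin n → K) (y : Fin m → K) :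
    aeval (lsSpec u y) (schurF (rectangle n (m + l))) = (∏ i, u i) ^ l * ∏ i, ∏ j, (u i + y j) := by
  let P : MvPolynomial (Fin n ⊕ Fin m) K :=
    aeval (lsSpec (X ∘ Sum.inl) (X ∘ Sum.inr)) (schurF (rectangle n (m + l)))
  let Q : MvPolynomial (Fin n ⊕ Fin m) K :=
    (∏ i, X (Sum.inl i)) ^ l * ∏ i, ∏ j, (X (Sum.inl i) + X (Sum.inr j))
  let g : MvPolynomial (Fin n ⊕ Fin m) K :=
    ∏ i, (X (Sum.inl i) * ∏ j ∈ univ.erase i, (X (Sum.inl i) - X (Sum.inl j)))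
  have hg : g ≠ 0 := prod_ne_zero_iff.mpr fun i _ => mul_ne_zero (X_ne_zero _)
    (prod_ne_zero_iff.mpr fun j hj => sub_ne_zero.mpr fun h =>
      ne_of_mem_erase hj (Sum.inl_injective (X_injective h)).symm)
  have hPQ : P = Q := eq_of_eval_eq_of_eval_ne_zero hg fun v hv => by
    simp only [g, map_prod, map_mul, map_sub, eval_X, prod_ne_zero_iff, mem_univ,
      forall_const, mul_ne_zero_iff] at hv
    have hinj : Function.Injective (v ∘ Sum.inl) := fun i j h => by
      by_contra hij
      exact (hv i).2 j (mem_erase.mpr ⟨Ne.symm hij, mem_univ j⟩) (sub_eq_zero.mpr h)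
    rw [eval_aeval_lsSpec,
      aeval_lsSpec_schurF_rectangle_of_injective (u := v ∘ Sum.inl) l (fun i => (hv i).1) hinj]
    simp [Q]
  have h := congrArg (eval (Sum.elim u y)) hPQ
  rw [eval_aeval_lsSpec] at h
  simpa [Q] using h

end Rectangle

/-- For `X` of `n` variables, `Y` of `m` variables and any `l ≥ 0`:
`LS_{⟨(m+l)ⁿ⟩}(-X; Y) = (∏_{x ∈ X} (-x))^l · ∏_{x ∈ X, y ∈ Y} (y - x)`. -/
theorem littlewood_schur_rectangle (n m l : ℕ) (x : Fin n → ℂ) (y : Fin m → ℂ) :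
    LSC (fun i => if i < n then m + l else 0) (fun i => -x i) y =
      (∏ i, -x i) ^ l * ∏ i, ∏ j, (y j - x i) := by
  refine (aeval_lsSpec_schurF_rectangle l (fun i => -x i) y).trans ?_
  simp only [neg_add_eq_sub]
end

section
/- Let g be a unitary N×N matrix with det(−g) ≠ −1 and define the completed characteristic polynomial Λ_g(z) = det(−g)^{1/2} z^{−N/2} det(I − z g^{−1}) for z ∉ ℝ_{≤0}. Then for all such z, Λ_g(z) = Λ_{g^{−1}}(z^{−1}), and consequently z Λ_g'(z)/Λ_g(z) = − w Λ_{g^{−1}}'(w)/Λ_{g^{−1}}(w) with w = z^{−1}, whenever z is not an eigenvalue of g. -/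
/-!
Factoring `1 - z • g⁻¹ = (-z) • g⁻¹ * (1 - z⁻¹ • g)` gives
`det (1 - z • g⁻¹) = z ^ N * det (-g)⁻¹ * det (1 - z⁻¹ • g)`, and the prefactors
`z ^ N * z ^ (-N/2)` and `det (-g)⁻¹ * det (-g) ^ (1/2)` become `(z⁻¹) ^ (-N/2)` and
`(det (-g)⁻¹) ^ (1/2)` because principal powers commute with inversion off the negative real
axis. For unitary `g` the number `det (-g)` has modulus one, so `det (-g) ≠ -1` keeps it off
that axis. Since the slit plane is open and stable under inversion, `Λ_g = Λ_{g⁻¹} ∘ (·⁻¹)`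
near `z`, and the chain rule for logarithmic derivatives gives the second identity.
-/

/-- The completed characteristic polynomial
`Λ_g(z) = det(-g)^{1/2} · z^{-N/2} · det(I - z g⁻¹)` of an `N × N` matrix `g`,
using the principal branches of the complex power function. -/
noncomputable def completedCharPoly (N : ℕ) (g : Matrix (Fin N) (Fin N) ℂ) (z : ℂ) : ℂ :=
  Matrix.det (-g) ^ ((1 : ℂ) / 2) * z ^ (-(N : ℂ) / 2) * Matrix.det (1 - z • g⁻¹)

open Complex Matrix Polynomial

namespace Matrix

variable {n : Type*} [Fintype n] [DecidableEq n]

lemma eval_charpolyRev_eq_det {R : Type*} [CommRing R] (M : Matrix n n R) (t : R) :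
    M.charpolyRev.eval t = det (1 - t • M) := by
  rw [charpolyRev, ← coe_evalRingHom, RingHom.map_det]
  congr 1
  ext i j
  by_cases hij : i = j <;> simp [hij, mul_comm t]

lemma differentiable_det_one_sub_smul {𝕜 : Type*} [NontriviallyNormedField 𝕜]
    (M : Matrix n n 𝕜) : Differentiable 𝕜 fun z : 𝕜 => det (1 - z • M) := by
  simpa only [eval_charpolyRev_eq_det] using M.charpolyRev.differentiable

lemma det_one_sub_smul_inv {K : Type*} [Field K] {g : Matrix n n K} (hg : IsUnit g.det)
    {z : K} (hz : z ≠ 0) :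
    det (1 - z • g⁻¹) = z ^ Fintype.card n * (det (-g))⁻¹ * det (1 - z⁻¹ • g) := by
  have hfac : 1 - z • g⁻¹ = (-z) • g⁻¹ * (1 - z⁻¹ • g) := by
    rw [Matrix.mul_sub, Matrix.mul_one, Matrix.smul_mul, Matrix.mul_smul, smul_smul,
      neg_mul, mul_inv_cancel₀ hz, Matrix.nonsing_inv_mul g hg, neg_smul, neg_smul, one_smul,
      sub_neg_eq_add]
    abel
  rw [hfac, det_mul, det_smul, det_nonsing_inv, Ring.inverse_eq_inv', det_neg, neg_pow,
    mul_inv, ← inv_pow, inv_neg, inv_one]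
  ring

end Matrix

namespace Complex

lemma mem_slitPlane_iff_not_nonpos {z : ℂ} : z ∈ slitPlane ↔ ¬(z.im = 0 ∧ z.re ≤ 0) := by
  rw [mem_slitPlane_iff, not_and_or, not_le, or_comm]

lemma inv_mem_slitPlane {z : ℂ} (hz : z ∈ slitPlane) : z⁻¹ ∈ slitPlane := by
  have hn : 0 < normSq z := normSq_pos.mpr (slitPlane_ne_zero hz)
  rw [mem_slitPlane_iff, inv_re, inv_im] at *
  rcases hz with h | h
  · exact Or.inl (div_pos h hn)
  · exact Or.inr (div_ne_zero (neg_ne_zero.mpr h) hn.ne')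

lemma arg_ne_pi_of_norm_eq_one {x : ℂ} (h1 : ‖x‖ = 1) (hx : x ≠ -1) : x.arg ≠ Real.pi := by
  intro hpi
  apply hx
  rw [← norm_mul_exp_arg_mul_I x, h1, hpi, exp_pi_mul_I, ofReal_one, one_mul]

lemma cpow_mul_cpow_neg_two_mul {x : ℂ} (hx : x ≠ 0) (s : ℂ) :
    x ^ s * x ^ (-2 * s) = (x ^ s)⁻¹ := by
  rw [← cpow_add _ _ hx, ← cpow_neg]
  ring_nf

end Complex

lemma mul_logDeriv_comp_inv {𝕜 : Type*} [NontriviallyNormedField 𝕜] {f : 𝕜 → 𝕜} {z : 𝕜}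
    (hf : DifferentiableAt 𝕜 f z⁻¹) (hz : z ≠ 0) :
    z * logDeriv (f ∘ (·⁻¹)) z = -(z⁻¹ * logDeriv f z⁻¹) := by
  rw [logDeriv_comp hf (differentiableAt_inv hz), deriv_inv]
  field_simp

lemma differentiableAt_completedCharPoly (N : ℕ) (g : Matrix (Fin N) (Fin N) ℂ) {z : ℂ}
    (hz : z ∈ slitPlane) : DifferentiableAt ℂ (completedCharPoly N g) z :=
  ((differentiableAt_const _).mul (differentiableAt_id.cpow_const hz)).mul
    (differentiable_det_one_sub_smul g⁻¹ z)

theorem completedCharPoly_eq_inv_apply_inv {N : ℕ} {g : Matrix (Fin N) (Fin N) ℂ}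
    (hg : IsUnit g.det) (harg : (-g).det.arg ≠ Real.pi) {z : ℂ} (hz : z ∈ slitPlane) :
    completedCharPoly N g z = completedCharPoly N g⁻¹ z⁻¹ := by
  have hz0 : z ≠ 0 := slitPlane_ne_zero hz
  have hD0 : (-g).det ≠ 0 := by
    rw [det_neg]
    exact mul_ne_zero (pow_ne_zero _ (by norm_num)) hg.ne_zero
  have hinvD : (-g⁻¹).det = ((-g).det)⁻¹ := by
    rw [det_neg, det_neg, det_nonsing_inv, Ring.inverse_eq_inv', mul_inv, ← inv_pow, inv_neg,
      inv_one]
  unfold completedCharPoly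
  rw [Matrix.nonsing_inv_nonsing_inv g hg, hinvD, inv_cpow _ _ harg,
    inv_cpow _ _ (slitPlane_arg_ne_pi hz), det_one_sub_smul_inv hg hz0, Fintype.card_fin]
  calc (-g).det ^ (1 / 2 : ℂ) * z ^ (-(N : ℂ) / 2) * (z ^ N * ((-g).det)⁻¹ * det (1 - z⁻¹ • g))
      = ((-g).det ^ (1 / 2 : ℂ) * (-g).det ^ (-2 * (1 / 2 : ℂ))) *
          (z ^ (-(N : ℂ) / 2) * z ^ (-2 * (-(N : ℂ) / 2))) * det (1 - z⁻¹ • g) := by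
        rw [show -2 * (1 / 2 : ℂ) = -1 by norm_num, cpow_neg_one,
          show -2 * (-(N : ℂ) / 2) = N by ring, cpow_natCast]
        ring
    _ = ((-g).det ^ (1 / 2 : ℂ))⁻¹ * (z ^ (-(N : ℂ) / 2))⁻¹ * det (1 - z⁻¹ • g) := by
        rw [cpow_mul_cpow_neg_two_mul hD0, cpow_mul_cpow_neg_two_mul hz0]

lemma arg_det_neg_ne_pi_of_mem_unitaryGroup {N : ℕ} {g : Matrix (Fin N) (Fin N) ℂ}
    (hg : g ∈ unitaryGroup (Fin N) ℂ) (hdet : (-g).det ≠ -1) : (-g).det.arg ≠ Real.pi := by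
  refine arg_ne_pi_of_norm_eq_one ?_ hdet
  rw [det_neg, norm_mul, norm_pow, norm_neg, norm_one, one_pow, one_mul]
  exact CStarRing.norm_of_mem_unitary (det_of_mem_unitary hg)

/-- **Functional equation for the completed characteristic polynomial.** For a
unitary `g` with `det(-g) ≠ -1` and all `z ∉ ℝ_{≤0}`:
`Λ_g(z) = Λ_{g⁻¹}(z⁻¹)`; consequently, whenever `z` is not an eigenvalue of `g`,
`z Λ_g'(z)/Λ_g(z) = -w Λ_{g⁻¹}'(w)/Λ_{g⁻¹}(w)` with `w = z⁻¹`. -/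
theorem completed_char_poly_functional_equation (N : ℕ)
    (g : Matrix (Fin N) (Fin N) ℂ) (hg : g ∈ Matrix.unitaryGroup (Fin N) ℂ)
    (hdet : Matrix.det (-g) ≠ -1) :
    (∀ z : ℂ, ¬(z.im = 0 ∧ z.re ≤ 0) →
      completedCharPoly N g z = completedCharPoly N g⁻¹ z⁻¹) ∧
    (∀ z : ℂ, ¬(z.im = 0 ∧ z.re ≤ 0) → z ∉ spectrum ℂ g →
      z * deriv (completedCharPoly N g) z / completedCharPoly N g z =
        -(z⁻¹ * deriv (completedCharPoly N g⁻¹) z⁻¹ / completedCharPoly N g⁻¹ z⁻¹)) := by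
  have hunit : IsUnit g.det := Unitary.isUnit_coe (U := ⟨_, det_of_mem_unitary hg⟩)
  have hfe : ∀ z ∈ slitPlane, completedCharPoly N g z = completedCharPoly N g⁻¹ z⁻¹ :=
    fun z hz => completedCharPoly_eq_inv_apply_inv hunit
      (arg_det_neg_ne_pi_of_mem_unitaryGroup hg hdet) hz
  simp only [← mem_slitPlane_iff_not_nonpos]
  refine ⟨hfe, fun z hz _ => ?_⟩
  have hnhds : completedCharPoly N g =ᶠ[nhds z] completedCharPoly N g⁻¹ ∘ (·⁻¹) :=
    Filter.eventually_of_mem (isOpen_slitPlane.mem_nhds hz) hfe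
  simp only [mul_div_assoc, ← logDeriv_apply]
  rw [(logDeriv_congr_nhds hnhds).eq_of_nhds]
  exact mul_logDeriv_comp_inv
    (differentiableAt_completedCharPoly N g⁻¹ (inv_mem_slitPlane hz)) (slitPlane_ne_zero hz)
end
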